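/- arXiv:0712.1078 — 7 statements merged into one kernel-verified Lean document; each statement's English description precedes it below -/
import Mathlib

section
/- Let q ∈ k be a scalar in a field k, and let A be a k-algebra with elements x, y, a, b such that ab·y = q² y·ab and xy − q yx = ab − 1. Then for all s ≥ 1: x y^s − q^s y^s x = (s)_q y^{s−1}(q^{s−1} ab − 1), where (s)_q = 1 + q + ⋯ + q^{s−1}. -/
lemma commutator_power_rule_aux (k : Type*) [Field k] (A : Type*) [Ring A] [Algebra k A]
    (q : k) (x y a b : A)
    (h1 : x * y - q • (y * x) = a * b - 1)
    (h2 : (a * b) * y = (q ^ 2) • (y * (a * b))) :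
    ∀ n : ℕ,
      x * y ^ (n + 1) - (q ^ (n + 1)) • (y ^ (n + 1) * x)
        = (∑ i ∈ Finset.range (n + 1), q ^ i) • (y ^ n * ((q ^ n) • (a * b) - 1)) := by
  intro n
  induction n with
  | zero => simpa using h1
  | succ n ih =>
    have hx := eq_add_of_sub_eq ih
    have hxy := eq_add_of_sub_eq h1
    have e : x * y ^ (n + 1 + 1)
        = (q ^ (n + 1)) • (y ^ (n + 1) * (q • (y * x) + (a * b - 1)))
          + (∑ i ∈ Finset.range (n + 1), q ^ i) •
              (y ^ n * ((q ^ n) • ((q ^ 2) • (y * (a * b))) - y)) := by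
      calc x * y ^ (n + 1 + 1) = (x * y ^ (n + 1)) * y := by
            rw [pow_succ, ← mul_assoc]
        _ = ((∑ i ∈ Finset.range (n + 1), q ^ i) • (y ^ n * ((q ^ n) • (a * b) - 1))
              + (q ^ (n + 1)) • (y ^ (n + 1) * x)) * y := by rw [hx]
        _ = _ := by
            rw [add_mul, smul_mul_assoc, smul_mul_assoc, mul_assoc, mul_assoc, hxy,
              sub_mul, smul_mul_assoc, one_mul, h2]
            ring_nf
            abel
    have hgeom : 1 + q * ∑ i ∈ Finset.range n, q ^ i
        = (∑ i ∈ Finset.range n, q ^ i) + q ^ n := by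
      have ha := Finset.sum_range_succ (fun i => q ^ i) n
      have hb := Finset.sum_range_succ' (fun i => q ^ i) n
      simp only [pow_succ, pow_zero, ← Finset.sum_mul] at hb
      linear_combination ha - hb
    have hsum2 : ∑ i ∈ Finset.range (n + 1 + 1), q ^ i
        = (∑ i ∈ Finset.range n, q ^ i) + q ^ n + q ^ (n + 1) := by
      rw [Finset.sum_range_succ, Finset.sum_range_succ]
    have hsum : ∑ i ∈ Finset.range (2 + n), q ^ i
        = (∑ i ∈ Finset.range n, q ^ i) + q ^ n + q ^ (n + 1) := by
      rw [show 2 + n = n + 1 + 1 by ring]; exact hsum2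
    rw [e, Finset.sum_range_succ]
    simp only [mul_add, mul_sub, mul_smul_comm, mul_one, smul_smul, smul_sub, smul_add,
      pow_succ, ← mul_assoc, ← pow_succ]
    match_scalars
    · ring
    · rw [hsum2]
      linear_combination (q * q ^ n) * hgeom
    · rw [hsum2]
      ring

/-- Braided commutator rule: if `xy − q yx = ab − 1` and `(ab)y = q² y(ab)`, then for
all `s ≥ 1`, `x y^s − q^s y^s x = (s)_q y^{s−1}(q^{s−1} ab − 1)`, where
`(s)_q = 1 + q + ⋯ + q^{s−1}`. -/
theorem commutator_power_rule (k : Type*) [Field k] (A : Type*) [Ring A] [Algebra k A]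
    (q : k) (x y a b : A)
    (h1 : x * y - q • (y * x) = a * b - 1)
    (h2 : (a * b) * y = (q ^ 2) • (y * (a * b))) :
    ∀ s : ℕ, 1 ≤ s →
      x * y ^ s - (q ^ s) • (y ^ s * x)
        = (∑ i ∈ Finset.range s, q ^ i) • (y ^ (s - 1) * ((q ^ (s - 1)) • (a * b) - 1)) := by
  intro s hs
  rcases s with _ | n
  · omega
  · simpa using commutator_power_rule_aux k A q x y a b h1 h2 n
end

section
/- Let A be a k-algebra with elements E, F, K satisfying EF − FE = η(K^{−m} − K^m), KE = θEK, KF = θ^{−1}FK with K invertible and q = θ^m. Then for every s ≥ 1: F E^s − E^s F = η (s)_q E^{s−1}(K^m − q^{−(s−1)} K^{−m}). -/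
/-!
`X ↦ F X - X F` is a derivation, so `[F, E^(s+1)] = [F, E] E^s + E [F, E^s]`. Since
`K^m E = q E K^m` and `K^(-m) E = q⁻¹ E K^(-m)`, the factors `K^(±m)` coming from `[F, E]` can be
moved to the right of `E^s` at the cost of `q^(±s)`, and the coefficients then obey the recursion
`(s+1)_q = (s)_q + q^s = q (s)_q + 1` of the `q`-integers.
-/

def QCommute {R A : Type*} [CommRing R] [Ring A] [Algebra R A] (c : R) (a b : A) : Prop :=
  a * b = c • (b * a)

namespace QCommute

variable {R A : Type*} [CommRing R] [Ring A] [Algebra R A]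

theorem pow_left {c : R} {a b : A} (h : QCommute c a b) (j : ℕ) : QCommute (c ^ j) (a ^ j) b := by
  induction j with
  | zero => simp [QCommute]
  | succ j ih =>
    calc a ^ (j + 1) * b = a ^ j * (a * b) := by rw [pow_succ, mul_assoc]
      _ = c • ((a ^ j * b) * a) := by rw [h, mul_smul_comm, mul_assoc]
      _ = c ^ (j + 1) • (b * a ^ (j + 1)) := by
        rw [ih, smul_mul_assoc, smul_smul, mul_assoc, ← pow_succ, pow_succ' c]

theorem pow_right {c : R} {a b : A} (h : QCommute c a b) (j : ℕ) : QCommute (c ^ j) a (b ^ j) := by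
  induction j with
  | zero => simp [QCommute]
  | succ j ih =>
    calc a * b ^ (j + 1) = (a * b ^ j) * b := by rw [pow_succ, mul_assoc]
      _ = c ^ j • (b ^ j * (a * b)) := by rw [ih, smul_mul_assoc, mul_assoc]
      _ = c ^ (j + 1) • (b ^ (j + 1) * a) := by
        rw [h, mul_smul_comm, smul_smul, ← pow_succ, ← mul_assoc, ← pow_succ]

theorem units_inv_left {c : Rˣ} {u : Aˣ} {b : A} (h : QCommute (c : R) (u : A) b) :
    QCommute ((c⁻¹ : Rˣ) : R) ((u⁻¹ : Aˣ) : A) b := by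
  have h' : b * ((u⁻¹ : Aˣ) : A) = (c : R) • (((u⁻¹ : Aˣ) : A) * b) := by
    calc b * ((u⁻¹ : Aˣ) : A) = ((u⁻¹ : Aˣ) : A) * ((u : A) * b) * ((u⁻¹ : Aˣ) : A) := by
          rw [← mul_assoc, Units.inv_mul, one_mul]
      _ = (c : R) • (((u⁻¹ : Aˣ) : A) * b) := by
          rw [h, mul_smul_comm, smul_mul_assoc, mul_assoc, mul_assoc b, Units.mul_inv, mul_one]
  rw [QCommute, h', smul_smul, ← Units.val_mul, inv_mul_cancel, Units.val_one, one_smul]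

theorem units_pow_left {c : Rˣ} {u : Aˣ} {b : A} (h : QCommute (c : R) (u : A) b) (j : ℕ) :
    QCommute ((c ^ j : Rˣ) : R) ((u ^ j : Aˣ) : A) b := by
  simpa only [Units.val_pow_eq_pow_val] using h.pow_left j

theorem mul_pow_succ_sub_pow_succ_mul {q q' η : R} (hqq' : q * q' = 1) {E F W W' : A}
    (hFE : F * E - E * F = η • (W - W')) (hW : QCommute q W E) (hW' : QCommute q' W' E) (s : ℕ) :
    F * E ^ (s + 1) - E ^ (s + 1) * F
      = (η * ∑ i ∈ Finset.range (s + 1), q ^ i) • (E ^ s * (W - q' ^ s • W')) := by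
  induction s with
  | zero => simpa using hFE
  | succ s ih =>
    have hleibniz : F * E ^ (s + 1 + 1) - E ^ (s + 1 + 1) * F
        = (F * E - E * F) * E ^ (s + 1) + E * (F * E ^ (s + 1) - E ^ (s + 1) * F) := by
      rw [pow_succ' E (s + 1)]; noncomm_ring
    have hWs : W * E ^ (s + 1) = _ := hW.pow_right (s + 1)
    have hW's : W' * E ^ (s + 1) = _ := hW'.pow_right (s + 1)
    rw [hleibniz, hFE, ih]
    simp only [smul_mul_assoc, mul_smul_comm, sub_mul, mul_sub, hWs, hW's, smul_sub, ← mul_assoc,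
      ← pow_succ']
    have hsum := Finset.sum_range_succ (fun i => q ^ i) (s + 1)
    have hgeom : ∑ i ∈ Finset.range (s + 1 + 1), q ^ i
        = q * ∑ i ∈ Finset.range (s + 1), q ^ i + 1 := geom_sum_succ
    match_scalars
    · linear_combination (-η) * hsum
    · linear_combination (η * q' ^ (s + 1)) * hgeom
        + (η * (∑ i ∈ Finset.range (s + 1), q ^ i) * q' ^ s) * hqq'

end QCommute

theorem FE_power_commutator_general (k : Type*) [Field k] (A : Type*) [Ring A] [Algebra k A]
    (m : ℕ)
    (θ : kˣ) (η : k)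
    (E F : A) (u : Aˣ)
    (hEF : E * F - F * E = η • (((u⁻¹ ^ m : Aˣ) : A) - ((u ^ m : Aˣ) : A)))
    (hKE : (u : A) * E = ((θ : kˣ) : k) • (E * (u : A))) :
    ∀ s : ℕ, 1 ≤ s →
      F * E ^ s - E ^ s * F
        = (η * ∑ i ∈ Finset.range s, (((θ ^ m : kˣ) : k)) ^ i) •
            (E ^ (s - 1) *
              (((u ^ m : Aˣ) : A)
                - ((((θ ^ m)⁻¹ : kˣ) : k)) ^ (s - 1) • ((u⁻¹ ^ m : Aˣ) : A))) := by
  intro s hs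
  obtain ⟨r, rfl⟩ := Nat.exists_eq_add_of_le' hs
  have hKE' : QCommute ((θ : kˣ) : k) (u : A) E := hKE
  have hFE : F * E - E * F = η • (((u ^ m : Aˣ) : A) - ((u⁻¹ ^ m : Aˣ) : A)) := by
    rw [← neg_sub, hEF, ← smul_neg, neg_sub]
  have hKinvE := hKE'.units_inv_left.units_pow_left m
  rw [inv_pow] at hKinvE
  simpa only [Nat.add_sub_cancel] using
    QCommute.mul_pow_succ_sub_pow_succ_mul (Units.mul_inv _) hFE (hKE'.units_pow_left m) hKinvE r

/-- Quantum `sl₂`-type commutation: if `EF − FE = η(K^{−m} − K^m)`, `KE = θEK`,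
`KF = θ⁻¹FK` with `K` invertible and `q = θ^m`, then for all `s ≥ 1`:
`F E^s − E^s F = η (s)_q E^{s−1}(K^m − q^{−(s−1)} K^{−m})`. -/
theorem FE_power_commutator (k : Type*) [Field k] (A : Type*) [Ring A] [Algebra k A]
    (n m : ℕ) (hn : 0 < n) (hm : 0 < m)
    (θ : kˣ) (hθ : orderOf θ = n * m) (η : k) (hη : η ≠ 0)
    (E F : A) (u : Aˣ)
    (hEF : E * F - F * E = η • (((u⁻¹ ^ m : Aˣ) : A) - ((u ^ m : Aˣ) : A)))
    (hKE : (u : A) * E = ((θ : kˣ) : k) • (E * (u : A)))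
    (hKF : (u : A) * F = ((θ⁻¹ : kˣ) : k) • (F * (u : A))) :
    ∀ s : ℕ, 1 ≤ s →
      F * E ^ s - E ^ s * F
        = (η * ∑ i ∈ Finset.range s, (((θ ^ m : kˣ) : k)) ^ i) •
            (E ^ (s - 1) *
              (((u ^ m : Aˣ) : A)
                - ((((θ ^ m)⁻¹ : kˣ) : k)) ^ (s - 1) • ((u⁻¹ ^ m : Aˣ) : A))) :=
  FE_power_commutator_general k A m θ η E F u hEF hKE
end

section
/- In a linked lifting H of a quantum plane with group-likes G, generators x, y and datum elements a, b ∈ G, q = χ₂(a), γ ∈ kˣ, the element C = a^{−1}xy − (γ/(q−1))(a^{−1} + q b) is central in H, and equals y a^{−1}x − (γ/(q−1))(b + q a^{−1}). -/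
/-!
Write `u = a⁻¹` and `λ = γ / (q - 1)`. Moving `u` across `x` and `y` costs `q` and `q⁻¹`, so `u`
commutes with `xy`; rewriting `xy` by the defining relation `xy = q yx + γ(ab - 1)` turns
`u xy - λ(u + qb)` into `y u x - λ(b + qu)`, the choice of `λ` being exactly what makes the
`b`- and `u`-terms match. With both forms at hand, `x C = C x` and `y C = C y` reduce to the
linear identities `x (b + qu) = (u + qb) x` and `y (u + qb) = (b + qu) y`, and every
group-like commutes with `u`, `b` and `xy`.
-/

section

variable {k H : Type*} [Field k] [Ring H] [Algebra k H]

theorem mul_eq_inv_smul_of_mul_eq_smul {u z : H} {c : kˣ} (h : u * z = (c : k) • (z * u)) :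
    z * u = ((c⁻¹ : kˣ) : k) • (u * z) := by
  rw [h, smul_smul, Units.inv_mul, one_smul]

theorem commute_mul_of_mul_eq_smul {u x y : H} {c : k} (hx : u * x = c • (x * u))
    (hy : y * u = c • (u * y)) : Commute u (x * y) :=
  calc u * (x * y) = c • (x * (u * y)) := by rw [← mul_assoc, hx, smul_mul_assoc, mul_assoc]
    _ = x * y * u := by rw [mul_assoc, hy, mul_smul_comm]

def casimir (q γ : k) (x y : H) (A B : Hˣ) : H :=
  ((A⁻¹ : Hˣ) : H) * x * y - (γ / (q - 1)) • (((A⁻¹ : Hˣ) : H) + q • (B : H))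

variable {q γ : k} {x y : H} {A B : Hˣ}

theorem casimir_eq_mul_sub_smul (hq : q ≠ 1) (hAy : y * ↑A⁻¹ = q • (↑A⁻¹ * y))
    (hxy : x * y - q • (y * x) = γ • ((A : H) * B - 1)) :
    casimir q γ x y A B = y * (↑A⁻¹ * x) - (γ / (q - 1)) • ((B : H) + q • ↑A⁻¹) := by
  have hxy' : ↑A⁻¹ * x * y = q • (↑A⁻¹ * (y * x)) + γ • (B : H) - γ • ↑A⁻¹ := by
    rw [mul_assoc, sub_eq_iff_eq_add.mp hxy, mul_add, mul_smul_comm, mul_smul_comm, mul_sub,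
      ← mul_assoc, Units.inv_mul, one_mul, mul_one, smul_sub]
    abel
  have hyAx : y * (↑A⁻¹ * x) = q • (↑A⁻¹ * (y * x)) := by
    rw [← mul_assoc, hAy, smul_mul_assoc, mul_assoc]
  rw [casimir, hxy', hyAx]
  have hq' : q - 1 ≠ 0 := sub_ne_zero.mpr hq
  match_scalars <;> field_simp <;> ring

theorem casimir_commute_x (hq : q ≠ 1) (hAx : ↑A⁻¹ * x = q • (x * ↑A⁻¹))
    (hAy : y * ↑A⁻¹ = q • (↑A⁻¹ * y)) (hBx : x * ↑B = q • (↑B * x))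
    (hxy : x * y - q • (y * x) = γ • ((A : H) * B - 1)) :
    Commute (casimir q γ x y A B) x := by
  have hxyA : x * (y * (↑A⁻¹ * x)) = ↑A⁻¹ * x * y * x := by
    rw [← mul_assoc, ← mul_assoc, ← (commute_mul_of_mul_eq_smul hAx hAy).eq, ← mul_assoc]
  have hlin : x * ((B : H) + q • ↑A⁻¹) = (↑A⁻¹ + q • (B : H)) * x := by
    rw [mul_add, add_mul, mul_smul_comm, smul_mul_assoc, hBx, ← hAx, add_comm]
  symm
  calc x * casimir q γ x y A B
      = x * (y * (↑A⁻¹ * x)) - (γ / (q - 1)) • (x * ((B : H) + q • ↑A⁻¹)) := by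
        rw [casimir_eq_mul_sub_smul hq hAy hxy, mul_sub, mul_smul_comm]
    _ = casimir q γ x y A B * x := by
        rw [hxyA, hlin, casimir, sub_mul, smul_mul_assoc]

theorem casimir_commute_y (hq : q ≠ 1) (hAy : y * ↑A⁻¹ = q • (↑A⁻¹ * y))
    (hBy : ↑B * y = q • (y * ↑B)) (hxy : x * y - q • (y * x) = γ • ((A : H) * B - 1)) :
    Commute (casimir q γ x y A B) y := by
  have hlin : y * (↑A⁻¹ + q • (B : H)) = ((B : H) + q • ↑A⁻¹) * y := by
    rw [mul_add, add_mul, mul_smul_comm, smul_mul_assoc, hAy, ← hBy, add_comm]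
  symm
  calc y * casimir q γ x y A B
      = y * (↑A⁻¹ * x) * y - (γ / (q - 1)) • (y * (↑A⁻¹ + q • (B : H))) := by
        simp only [casimir, mul_sub, mul_smul_comm, mul_assoc]
    _ = casimir q γ x y A B * y := by
        rw [hlin, casimir_eq_mul_sub_smul hq hAy hxy, sub_mul, smul_mul_assoc]

theorem casimir_commute_of_commute {v : H} (hA : Commute v ↑A⁻¹) (hB : Commute v B)
    (hxy : Commute v (x * y)) : Commute (casimir q γ x y A B) v := by
  refine Commute.symm ?_
  rw [casimir, mul_assoc]
  exact (hA.mul_right hxy).sub_right ((hA.add_right (hB.smul_right q)).smul_right _)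

end

theorem linked_lifting_casimir_general (k : Type*) [Field k]
    (G : Type*) [CommGroup G]
    (H : Type*) [Ring H] [Algebra k H]
    (ι : G →* Hˣ) (x y : H) (χ : G →* kˣ) (a b : G)
    (q : k) (hq : q = (((χ a)⁻¹ : kˣ) : k)) (hab : χ a = χ b)
    (n : ℕ) (hn : n = orderOf (χ a)) (hn1 : 1 < n)
    (γ : k)
    (hgx : ∀ g : G, ((ι g : Hˣ) : H) * x = ((χ g : kˣ) : k) • (x * ((ι g : Hˣ) : H)))
    (hgy : ∀ g : G, ((ι g : Hˣ) : H) * y = (((χ g)⁻¹ : kˣ) : k) • (y * ((ι g : Hˣ) : H)))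
    (hxy : x * y - q • (y * x) = γ • (((ι (a * b) : Hˣ) : H) - 1)) :
    (∀ g : G,
        ((((ι a)⁻¹ : Hˣ) : H) * x * y
            - (γ / (q - 1)) • ((((ι a)⁻¹ : Hˣ) : H) + q • ((ι b : Hˣ) : H)))
          * ((ι g : Hˣ) : H)
        = ((ι g : Hˣ) : H) *
          ((((ι a)⁻¹ : Hˣ) : H) * x * y
            - (γ / (q - 1)) • ((((ι a)⁻¹ : Hˣ) : H) + q • ((ι b : Hˣ) : H)))) ∧
    ((((ι a)⁻¹ : Hˣ) : H) * x * y
        - (γ / (q - 1)) • ((((ι a)⁻¹ : Hˣ) : H) + q • ((ι b : Hˣ) : H))) * x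
      = x * ((((ι a)⁻¹ : Hˣ) : H) * x * y
        - (γ / (q - 1)) • ((((ι a)⁻¹ : Hˣ) : H) + q • ((ι b : Hˣ) : H))) ∧
    ((((ι a)⁻¹ : Hˣ) : H) * x * y
        - (γ / (q - 1)) • ((((ι a)⁻¹ : Hˣ) : H) + q • ((ι b : Hˣ) : H))) * y
      = y * ((((ι a)⁻¹ : Hˣ) : H) * x * y
        - (γ / (q - 1)) • ((((ι a)⁻¹ : Hˣ) : H) + q • ((ι b : Hˣ) : H))) ∧
    (((ι a)⁻¹ : Hˣ) : H) * x * y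
        - (γ / (q - 1)) • ((((ι a)⁻¹ : Hˣ) : H) + q • ((ι b : Hˣ) : H))
      = y * ((((ι a)⁻¹ : Hˣ) : H) * x)
        - (γ / (q - 1)) • (((ι b : Hˣ) : H) + q • (((ι a)⁻¹ : Hˣ) : H)) := by
  have hq1 : q ≠ 1 := by
    rintro rfl
    rw [eq_comm, Units.val_eq_one, inv_eq_one] at hq
    rw [hn, hq, orderOf_one] at hn1
    exact lt_irrefl 1 hn1
  have hAx : (((ι a)⁻¹ : Hˣ) : H) * x = q • (x * (((ι a)⁻¹ : Hˣ) : H)) := by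
    simpa only [map_inv, ← hq] using hgx a⁻¹
  have hAy : y * (((ι a)⁻¹ : Hˣ) : H) = q • ((((ι a)⁻¹ : Hˣ) : H) * y) := by
    simpa only [map_inv, inv_inv, ← hq] using mul_eq_inv_smul_of_mul_eq_smul (hgy a⁻¹)
  have hBx : x * (ι b : H) = q • ((ι b : H) * x) := by
    simpa only [← hab, ← hq] using mul_eq_inv_smul_of_mul_eq_smul (hgx b)
  have hBy : (ι b : H) * y = q • (y * (ι b : H)) := by
    simpa only [← hab, ← hq] using hgy b
  rw [map_mul, Units.val_mul] at hxy
  refine ⟨fun g => casimir_commute_of_commute ?_ ?_ ?_, casimir_commute_x hq1 hAx hAy hBx hxy,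
    casimir_commute_y hq1 hAy hBy hxy, casimir_eq_mul_sub_smul hq1 hAy hxy⟩
  · exact ((Commute.all g a).map ι).inv_right.units_val
  · exact ((Commute.all g b).map ι).units_val
  · exact commute_mul_of_mul_eq_smul (hgx g) (by
      simpa only [inv_inv] using mul_eq_inv_smul_of_mul_eq_smul (hgy g))

/-- In a linked lifting `H` of a quantum plane, the Casimir element
`C = a⁻¹xy − (γ/(q−1))(a⁻¹ + qb)` is central and equals
`y a⁻¹x − (γ/(q−1))(b + q a⁻¹)`. -/
theorem linked_lifting_casimir (k : Type*) [Field k] [IsAlgClosed k] [CharZero k]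
    (G : Type*) [CommGroup G] [Fintype G]
    (H : Type*) [Ring H] [Algebra k H]
    (ι : G →* Hˣ) (x y : H) (χ : G →* kˣ) (a b : G)
    (q : k) (hq : q = (((χ a)⁻¹ : kˣ) : k)) (hab : χ a = χ b)
    (n : ℕ) (hn : n = orderOf (χ a)) (hn1 : 1 < n)
    (γ ε₁ ε₂ : k) (hγ : γ ≠ 0) (hab1 : a * b ≠ 1)
    (hε₁ : ε₁ = 0 ∨ ε₁ = 1) (hε₂ : ε₂ = 0 ∨ ε₂ = 1)
    (hgx : ∀ g : G, ((ι g : Hˣ) : H) * x = ((χ g : kˣ) : k) • (x * ((ι g : Hˣ) : H)))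
    (hgy : ∀ g : G, ((ι g : Hˣ) : H) * y = (((χ g)⁻¹ : kˣ) : k) • (y * ((ι g : Hˣ) : H)))
    (hxy : x * y - q • (y * x) = γ • (((ι (a * b) : Hˣ) : H) - 1))
    (hxn : x ^ n = ε₁ • (((ι (a ^ n) : Hˣ) : H) - 1))
    (hyn : y ^ n = ε₂ • (((ι (b ^ n) : Hˣ) : H) - 1)) :
    (∀ g : G,
        ((((ι a)⁻¹ : Hˣ) : H) * x * y
            - (γ / (q - 1)) • ((((ι a)⁻¹ : Hˣ) : H) + q • ((ι b : Hˣ) : H)))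
          * ((ι g : Hˣ) : H)
        = ((ι g : Hˣ) : H) *
          ((((ι a)⁻¹ : Hˣ) : H) * x * y
            - (γ / (q - 1)) • ((((ι a)⁻¹ : Hˣ) : H) + q • ((ι b : Hˣ) : H)))) ∧
    ((((ι a)⁻¹ : Hˣ) : H) * x * y
        - (γ / (q - 1)) • ((((ι a)⁻¹ : Hˣ) : H) + q • ((ι b : Hˣ) : H))) * x
      = x * ((((ι a)⁻¹ : Hˣ) : H) * x * y
        - (γ / (q - 1)) • ((((ι a)⁻¹ : Hˣ) : H) + q • ((ι b : Hˣ) : H))) ∧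
    ((((ι a)⁻¹ : Hˣ) : H) * x * y
        - (γ / (q - 1)) • ((((ι a)⁻¹ : Hˣ) : H) + q • ((ι b : Hˣ) : H))) * y
      = y * ((((ι a)⁻¹ : Hˣ) : H) * x * y
        - (γ / (q - 1)) • ((((ι a)⁻¹ : Hˣ) : H) + q • ((ι b : Hˣ) : H))) ∧
    (((ι a)⁻¹ : Hˣ) : H) * x * y
        - (γ / (q - 1)) • ((((ι a)⁻¹ : Hˣ) : H) + q • ((ι b : Hˣ) : H))
      = y * ((((ι a)⁻¹ : Hˣ) : H) * x)
        - (γ / (q - 1)) • (((ι b : Hˣ) : H) + q • (((ι a)⁻¹ : Hˣ) : H)) :=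
  linked_lifting_casimir_general k G H ι x y χ a b q hq hab n hn hn1 γ hgx hgy hxy
end

section
/- Every linked lifting H of a two-dimensional quantum linear space is unimodular: the element I = e x^{n−1} y^{n−1}, where e = |G|^{−1} ∑_{g∈G} g, satisfies h·I = ε(h) I = I·h for all h ∈ H, i.e. I is a two-sided integral. -/
/-!
Write `e` for the group average, `c = ab` and `J = x^{n-1} y^{n-1}`. Since `x` and `y` carry
inverse characters, `J` commutes with `G`, so `I = eJ = Je` absorbs `G` on both sides. The products
`xI = x^n y^{n-1} e` and `Iy = e x^{n-1} y^n` vanish: `x^n` and `y^n` are multiples of `g - 1` for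
group-likes `g` (`a^n`, resp. `b^n`) that are absorbed by `e` and commute with `y`, resp. `x`.
For `yI`, the q-commutator formula `x^{m+1} y - q^{m+1} y x^{m+1} = γ [m+1]_q (q^m c - 1) x^m` with
`m = n - 2` moves `y` past `x^{n-1}`; the main term is `x^{n-1} y^n e = 0`, and the correction
vanishes because `c` acts on `x^{n-2} y^{n-1} e` by `q^2`, so `q^{n-2} c - 1` acts by `q^n - 1 = 0`.
`Ix = 0` is the same computation in the opposite algebra. Finally, the `h` with
`hI = ε(h) I = Ih` form a subalgebra, which contains the generators.
-/

open Finset MulOpposite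

section QuantumPlane

variable {k A : Type*} [Field k] [Ring A] [Algebra k A] {X Y c : A} {q γ : k}

theorem pow_mul_eq_smul_mul_pow {a : A} {r : k} (h : a * c = r • (c * a)) (j : ℕ) :
    a ^ j * c = r ^ j • (c * a ^ j) := by
  induction j with
  | zero => simp
  | succ j ih =>
    rw [pow_succ', mul_assoc, ih, mul_smul_comm, ← mul_assoc, h, smul_mul_assoc, smul_smul,
      mul_assoc, ← pow_succ]

theorem mul_pow_eq_smul_pow_mul {a : A} {r : k} (h : c * a = r • (a * c)) (j : ℕ) :
    c * a ^ j = r ^ j • (a ^ j * c) := by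
  induction j with
  | zero => simp
  | succ j ih =>
    rw [pow_succ, ← mul_assoc, ih, smul_mul_assoc, mul_assoc, h, mul_smul_comm, smul_smul,
      ← mul_assoc, ← pow_succ, ← pow_succ]

theorem pow_succ_mul_sub_smul_mul_pow_succ (hXY : X * Y - q • (Y * X) = γ • (c - 1))
    (hXc : X * c = q ^ 2 • (c * X)) (m : ℕ) :
    X ^ (m + 1) * Y - q ^ (m + 1) • (Y * X ^ (m + 1)) =
      (γ * ∑ i ∈ range (m + 1), q ^ i) • ((q ^ m • c - 1) * X ^ m) := by
  induction m with
  | zero => simpa using hXY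
  | succ m ih =>
    rw [sub_eq_iff_eq_add] at hXY ih
    have hS : q * ∑ i ∈ range (m + 1), q ^ i + 1 =
        ∑ i ∈ range (m + 1), q ^ i + q ^ (m + 1) := by
      rw [← geom_sum_succ, sum_range_succ]
    rw [sum_range_succ _ (m + 1)]
    set S := ∑ i ∈ range (m + 1), q ^ i
    calc X ^ (m + 2) * Y - q ^ (m + 2) • (Y * X ^ (m + 2))
        = (γ * S) • ((q ^ m • (X * c) - X) * X ^ m)
            + q ^ (m + 1) • ((X * Y) * X ^ (m + 1)) - q ^ (m + 2) • (Y * X ^ (m + 2)) := by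
          rw [pow_succ' X (m + 1), mul_assoc, ih, mul_add, mul_smul_comm, mul_smul_comm,
            ← mul_assoc, ← mul_assoc, mul_sub, mul_smul_comm, mul_one]
      _ = _ := by
          rw [hXY, hXc]
          simp only [add_mul, sub_mul, smul_mul_assoc, mul_assoc, ← pow_succ', one_mul]
          linear_combination (norm := module) (γ * q ^ (m + 1) * hS) • (c * X ^ (m + 1))

theorem mul_pow_mul_pow_mul_eq_zero_left {e : A} {m : ℕ}
    (hXY : X * Y - q • (Y * X) = γ • (c - 1)) (hXc : X * c = q ^ 2 • (c * X))
    (hcY : c * Y = q ^ 2 • (Y * c)) (hqm : q ^ (m + 2) = 1) (hce : c * e = e)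
    (hYe : Y ^ (m + 2) * e = 0) :
    Y * (X ^ (m + 1) * Y ^ (m + 1) * e) = 0 := by
  have hq : q ≠ 0 := by rintro rfl; simp at hqm
  set Z := X ^ m * Y ^ (m + 1) * e
  have hcZ : c * Z = q ^ 2 • Z := by
    apply smul_right_injective A (pow_ne_zero m (pow_ne_zero 2 hq))
    calc (q ^ 2) ^ m • (c * Z) = X ^ m * c * (Y ^ (m + 1) * e) := by
          rw [pow_mul_eq_smul_mul_pow hXc, smul_mul_assoc]; simp only [Z, mul_assoc]
      _ = (q ^ 2) ^ m • (q ^ 2 • Z) := by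
          rw [mul_assoc, ← mul_assoc c, mul_pow_eq_smul_pow_mul hcY, smul_mul_assoc, mul_assoc,
            hce, mul_smul_comm, smul_smul, ← pow_succ]; simp only [Z, mul_assoc]
  have hYZ : q ^ (m + 1) • (Y * (X ^ (m + 1) * Y ^ (m + 1) * e)) = 0 := by
    calc q ^ (m + 1) • (Y * (X ^ (m + 1) * Y ^ (m + 1) * e))
        = X ^ (m + 1) * (Y ^ (m + 2) * e)
          - (X ^ (m + 1) * Y - q ^ (m + 1) • (Y * X ^ (m + 1))) * (Y ^ (m + 1) * e) := by
          rw [sub_mul, smul_mul_assoc, pow_succ' Y (m + 1)]; simp only [mul_assoc]; abel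
      _ = -((γ * ∑ i ∈ range (m + 1), q ^ i) • (q ^ m • (c * Z) - Z)) := by
          rw [hYe, mul_zero, zero_sub, pow_succ_mul_sub_smul_mul_pow_succ hXY hXc]
          simp only [Z, sub_mul, smul_mul_assoc, one_mul, mul_assoc]
      _ = 0 := by rw [hcZ, smul_smul, ← pow_add, hqm, one_smul, sub_self, smul_zero, neg_zero]
  exact (smul_eq_zero.mp hYZ).resolve_left (pow_ne_zero _ hq)

theorem mul_pow_mul_pow_mul_eq_zero_right {e : A} {m : ℕ}
    (hXY : X * Y - q • (Y * X) = γ • (c - 1)) (hXc : X * c = q ^ 2 • (c * X))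
    (hcY : c * Y = q ^ 2 • (Y * c)) (hqm : q ^ (m + 2) = 1) (hec : e * c = e)
    (heX : e * X ^ (m + 2) = 0) :
    e * X ^ (m + 1) * Y ^ (m + 1) * X = 0 := by
  apply op_injective
  have := mul_pow_mul_pow_mul_eq_zero_left (A := Aᵐᵒᵖ) (X := op Y) (Y := op X) (c := op c)
    (e := op e) (m := m) (by simpa using congrArg op hXY) (by simpa using congrArg op hcY)
    (by simpa using congrArg op hXc) hqm (by simpa using congrArg op hec)
    (by simpa using congrArg op heX)
  simpa [← op_pow, ← op_mul, mul_assoc] using this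

end QuantumPlane

theorem mul_eq_smul_and_mul_eq_smul_of_adjoin_eq_top {k A : Type*} [Field k] [Ring A]
    [Algebra k A] {s : Set A} (hs : Algebra.adjoin k s = ⊤) (ε : A →ₐ[k] k) {I : A}
    (h : ∀ z ∈ s, z * I = ε z • I ∧ I * z = ε z • I) (z : A) :
    z * I = ε z • I ∧ I * z = ε z • I := by
  have hz : z ∈ Algebra.adjoin k s := hs ▸ Algebra.mem_top
  induction hz using Algebra.adjoin_induction with
  | mem z hz => exact h z hz
  | algebraMap r => simp [Algebra.smul_def, Algebra.commutes]
  | add z w _ _ hz hw => simp only [add_mul, mul_add, hz, hw, map_add, add_smul, and_self]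
  | mul z w _ _ hz hw =>
    constructor
    · rw [mul_assoc, hw.1, mul_smul_comm, hz.1, smul_smul, map_mul, mul_comm]
    · rw [← mul_assoc, hz.2, smul_mul_assoc, hw.2, smul_smul, map_mul]

section GroupAverage

variable {k G H : Type*} [Field k] [Group G] [Ring H] [Algebra k H] (ι : G →* Hˣ) {x y : H}

theorem commute_coe_pow_mul_pow {χ : G →* kˣ}
    (hgx : ∀ g, (ι g : H) * x = (χ g : k) • (x * ι g))
    (hgy : ∀ g, (ι g : H) * y = ((χ g)⁻¹ : kˣ) • (y * ι g)) (g : G) (j : ℕ) :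
    Commute (ι g : H) (x ^ j * y ^ j) := by
  rw [Commute, SemiconjBy, ← mul_assoc, mul_pow_eq_smul_pow_mul (hgx g), smul_mul_assoc,
    mul_assoc, mul_pow_eq_smul_pow_mul (hgy g), mul_smul_comm, smul_smul, ← mul_pow,
    Units.mul_inv, one_pow, one_smul, mul_assoc]

variable (k) [Fintype G]

def groupAverage : H := (Fintype.card G : k)⁻¹ • ∑ g, (ι g : H)

variable {k}

theorem coe_mul_groupAverage (s : G) : (ι s : H) * groupAverage k ι = groupAverage k ι := by
  rw [groupAverage, mul_smul_comm, mul_sum]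
  simp_rw [← Units.val_mul, ← map_mul]
  exact congrArg _ (Equiv.sum_comp (Equiv.mulLeft s) fun g => (ι g : H))

theorem groupAverage_mul_coe (s : G) : groupAverage k ι * ι s = groupAverage k ι := by
  rw [groupAverage, smul_mul_assoc, sum_mul]
  simp_rw [← Units.val_mul, ← map_mul]
  exact congrArg _ (Equiv.sum_comp (Equiv.mulRight s) fun g => (ι g : H))

theorem groupAverage_mul_smul_sub_one (r : k) (s : G) :
    groupAverage k ι * (r • ((ι s : H) - 1)) = 0 := by
  rw [mul_smul_comm, mul_sub, groupAverage_mul_coe, mul_one, sub_self, smul_zero]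

theorem smul_sub_one_mul_groupAverage (r : k) (s : G) :
    r • ((ι s : H) - 1) * groupAverage k ι = 0 := by
  rw [smul_mul_assoc, sub_mul, coe_mul_groupAverage, one_mul, sub_self, smul_zero]

theorem commute_groupAverage {z : H} (hz : ∀ g, Commute (ι g : H) z) :
    Commute (groupAverage k ι) z :=
  (Commute.sum_left _ _ _ fun g _ => hz g).smul_left _

variable {m : ℕ} {r : k} {s : G}

theorem mul_groupAverage_mul_pow_mul_pow_eq_zero (hxn : x ^ (m + 2) = r • ((ι s : H) - 1))
    (hsy : Commute (ι s : H) y) (hJ : Commute (groupAverage k ι) (x ^ (m + 1) * y ^ (m + 1))) :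
    x * (groupAverage k ι * x ^ (m + 1) * y ^ (m + 1)) = 0 := by
  have hxy : Commute (x ^ (m + 2)) (y ^ (m + 1)) :=
    hxn ▸ ((hsy.pow_right _).sub_left (Commute.one_left _)).smul_left r
  rw [mul_assoc, hJ.eq, ← mul_assoc, ← mul_assoc, ← pow_succ', hxy.eq, mul_assoc, hxn,
    smul_sub_one_mul_groupAverage, mul_zero]

theorem groupAverage_mul_pow_mul_pow_mul_eq_zero (hyn : y ^ (m + 2) = r • ((ι s : H) - 1))
    (hsx : Commute (ι s : H) x) :
    groupAverage k ι * x ^ (m + 1) * y ^ (m + 1) * y = 0 := by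
  have hxy : Commute (x ^ (m + 1)) (y ^ (m + 2)) :=
    hyn ▸ (((hsx.pow_right _).sub_left (Commute.one_left _)).smul_left r).symm
  rw [mul_assoc, ← pow_succ, mul_assoc, hxy.eq, ← mul_assoc, hyn,
    groupAverage_mul_smul_sub_one, zero_mul]

end GroupAverage

theorem linked_lifting_unimodular_general (k : Type*) [Field k]
    (G : Type*) [CommGroup G] [Fintype G]
    (H : Type*) [Ring H] [Algebra k H]
    (ι : G →* Hˣ) (x y : H) (χ : G →* kˣ) (a b : G)
    (q : k) (hq : q = (((χ a)⁻¹ : kˣ) : k)) (hab : χ a = χ b)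
    (n : ℕ) (hn : n = orderOf (χ a)) (hn1 : 1 < n)
    (γ ε₁ ε₂ : k)
    (hgx : ∀ g : G, ((ι g : Hˣ) : H) * x = ((χ g : kˣ) : k) • (x * ((ι g : Hˣ) : H)))
    (hgy : ∀ g : G, ((ι g : Hˣ) : H) * y = (((χ g)⁻¹ : kˣ) : k) • (y * ((ι g : Hˣ) : H)))
    (hxy : x * y - q • (y * x) = γ • (((ι (a * b) : Hˣ) : H) - 1))
    (hxn : x ^ n = ε₁ • (((ι (a ^ n) : Hˣ) : H) - 1))
    (hyn : y ^ n = ε₂ • (((ι (b ^ n) : Hˣ) : H) - 1))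
    (hgen : Algebra.adjoin k
      ({x, y} ∪ Set.range fun g : G => ((ι g : Hˣ) : H)) = ⊤)
    (εH : H →ₐ[k] k) (hεx : εH x = 0) (hεy : εH y = 0)
    (hεg : ∀ g : G, εH ((ι g : Hˣ) : H) = 1) :
    ∀ h : H,
      h * (((Fintype.card G : k)⁻¹ • ∑ g : G, ((ι g : Hˣ) : H)) * x ^ (n - 1) * y ^ (n - 1))
        = εH h •
          (((Fintype.card G : k)⁻¹ • ∑ g : G, ((ι g : Hˣ) : H)) * x ^ (n - 1) * y ^ (n - 1)) ∧
      (((Fintype.card G : k)⁻¹ • ∑ g : G, ((ι g : Hˣ) : H)) * x ^ (n - 1) * y ^ (n - 1)) * h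
        = εH h •
          (((Fintype.card G : k)⁻¹ • ∑ g : G, ((ι g : Hˣ) : H)) * x ^ (n - 1) * y ^ (n - 1)) := by
  obtain ⟨m, rfl⟩ : ∃ m, n = m + 2 := ⟨n - 2, by omega⟩
  have hqm : q ^ (m + 2) = 1 := by
    rw [hq, ← Units.val_pow_eq_pow_val, inv_pow, hn, pow_orderOf_eq_one, inv_one, Units.val_one]
  have hχab : ((χ (a * b) : kˣ) : k) = (q ^ 2)⁻¹ := by
    rw [map_mul, Units.val_mul, ← hab, hq, Units.val_inv_eq_inv_val, inv_pow, inv_inv, sq]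
  have hxc : x * ι (a * b) = q ^ 2 • ((ι (a * b) : H) * x) := by
    rw [hgx, hχab, smul_smul, mul_inv_cancel₀ (pow_ne_zero 2 (hq ▸ Units.ne_zero _)), one_smul]
  have hcy : (ι (a * b) : H) * y = q ^ 2 • (y * ι (a * b)) := by
    rw [hgy, Units.val_inv_eq_inv_val, hχab, inv_inv]
  have hay : Commute (ι (a ^ (m + 2)) : H) y := by
    simpa [Commute, SemiconjBy, hn, pow_orderOf_eq_one] using hgy (a ^ (m + 2))
  have hbx : Commute (ι (b ^ (m + 2)) : H) x := by
    simpa [Commute, SemiconjBy, ← hab, hn, pow_orderOf_eq_one] using hgx (b ^ (m + 2))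
  have hJ := commute_groupAverage (k := k) ι (commute_coe_pow_mul_pow ι hgx hgy · (m + 1))
  refine mul_eq_smul_and_mul_eq_smul_of_adjoin_eq_top
    (I := groupAverage k ι * x ^ (m + 1) * y ^ (m + 1)) hgen εH fun z hz => ?_
  rcases hz with (rfl | rfl) | ⟨g, rfl⟩
  · rw [hεx, zero_smul]
    exact ⟨mul_groupAverage_mul_pow_mul_pow_eq_zero ι hxn hay hJ,
      mul_pow_mul_pow_mul_eq_zero_right hxy hxc hcy hqm (groupAverage_mul_coe ι _)
        (by rw [hxn, groupAverage_mul_smul_sub_one])⟩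
  · rw [hεy, zero_smul]
    refine ⟨?_, groupAverage_mul_pow_mul_pow_mul_eq_zero ι hyn hbx⟩
    rw [mul_assoc, hJ.eq]
    exact mul_pow_mul_pow_mul_eq_zero_left hxy hxc hcy hqm (coe_mul_groupAverage ι _)
      (by rw [hyn, smul_sub_one_mul_groupAverage])
  · dsimp only
    rw [hεg, one_smul]
    have hgJ := commute_coe_pow_mul_pow ι hgx hgy g (m + 1)
    exact ⟨by rw [← mul_assoc, ← mul_assoc, coe_mul_groupAverage],
      by rw [mul_assoc (groupAverage k ι), mul_assoc, ← hgJ.eq, ← mul_assoc,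
        groupAverage_mul_coe]⟩

/-- Every linked lifting `H` of a quantum plane is unimodular:
`I = e x^{n−1} y^{n−1}`, with `e = |G|⁻¹ ∑_{g∈G} g`, is a two-sided integral, i.e.
`h·I = ε(h)·I = I·h` for all `h ∈ H`, where `ε` is the counit. -/
theorem linked_lifting_unimodular (k : Type*) [Field k] [IsAlgClosed k] [CharZero k]
    (G : Type*) [CommGroup G] [Fintype G]
    (H : Type*) [Ring H] [Algebra k H]
    (ι : G →* Hˣ) (x y : H) (χ : G →* kˣ) (a b : G)
    (q : k) (hq : q = (((χ a)⁻¹ : kˣ) : k)) (hab : χ a = χ b)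
    (n : ℕ) (hn : n = orderOf (χ a)) (hn1 : 1 < n)
    (γ ε₁ ε₂ : k) (hγ : γ ≠ 0) (hab1 : a * b ≠ 1)
    (hε₁ : ε₁ = 0 ∨ ε₁ = 1) (hε₂ : ε₂ = 0 ∨ ε₂ = 1)
    (hχ₁ : ε₁ = 1 → χ ^ n = 1) (hχ₂ : ε₂ = 1 → χ ^ n = 1)
    (hgx : ∀ g : G, ((ι g : Hˣ) : H) * x = ((χ g : kˣ) : k) • (x * ((ι g : Hˣ) : H)))
    (hgy : ∀ g : G, ((ι g : Hˣ) : H) * y = (((χ g)⁻¹ : kˣ) : k) • (y * ((ι g : Hˣ) : H)))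
    (hxy : x * y - q • (y * x) = γ • (((ι (a * b) : Hˣ) : H) - 1))
    (hxn : x ^ n = ε₁ • (((ι (a ^ n) : Hˣ) : H) - 1))
    (hyn : y ^ n = ε₂ • (((ι (b ^ n) : Hˣ) : H) - 1))
    (hgen : Algebra.adjoin k
      ({x, y} ∪ Set.range fun g : G => ((ι g : Hˣ) : H)) = ⊤)
    (εH : H →ₐ[k] k) (hεx : εH x = 0) (hεy : εH y = 0)
    (hεg : ∀ g : G, εH ((ι g : Hˣ) : H) = 1) :
    ∀ h : H,
      h * (((Fintype.card G : k)⁻¹ • ∑ g : G, ((ι g : Hˣ) : H)) * x ^ (n - 1) * y ^ (n - 1))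
        = εH h •
          (((Fintype.card G : k)⁻¹ • ∑ g : G, ((ι g : Hˣ) : H)) * x ^ (n - 1) * y ^ (n - 1)) ∧
      (((Fintype.card G : k)⁻¹ • ∑ g : G, ((ι g : Hˣ) : H)) * x ^ (n - 1) * y ^ (n - 1)) * h
        = εH h •
          (((Fintype.card G : k)⁻¹ • ∑ g : G, ((ι g : Hˣ) : H)) * x ^ (n - 1) * y ^ (n - 1)) :=
  linked_lifting_unimodular_general k G H ι x y χ a b q hq hab n hn hn1 γ ε₁ ε₂ hgx hgy hxy hxn hyn
    hgen εH hεx hεy hεg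
end

section
/- In a linked lifting H of a quantum plane, the square of the antipode is inner: S²(h) = a^{−1} h a for all h ∈ H, where a ∈ G is the group-like in the lifting datum. (Combined with unimodularity, H is a symmetric algebra.) -/
/-!
Since `S` is anti-multiplicative, `S²` is an algebra endomorphism of `H`, and so is conjugation
by `a`; as `H` is generated by `x`, `y` and `G`, it suffices to compare them on generators.
Both fix `G` because `G` is abelian. From `S x = -a⁻¹x` and `S a⁻¹ = a` one gets
`S² x = a⁻¹ x a`, and likewise `S² y = b⁻¹ y b = χ(b) y`, which equals `a⁻¹ y a = χ(a) y`
because `χ(a) = χ(b)`.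
-/

section AntiMultiplicative

variable {R A : Type*} [CommSemiring R] [Semiring A] [Algebra R A]

@[simps]
def AlgHom.sqOfAntiMul (S : A → A) (hadd : ∀ h h' : A, S (h + h') = S h + S h')
    (hsmul : ∀ (c : R) (h : A), S (c • h) = c • S h) (hmul : ∀ h h' : A, S (h * h') = S h' * S h)
    (hone : S 1 = 1) : A →ₐ[R] A where
  toFun h := S (S h)
  map_one' := by rw [hone, hone]
  map_mul' h h' := by rw [hmul, hmul]
  map_zero' := by
    have hzero : S 0 = 0 := by simpa using hsmul 0 0
    rw [hzero, hzero]
  map_add' h h' := by rw [hadd, hadd]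
  commutes' r := by rw [Algebra.algebraMap_eq_smul_one, hsmul, hsmul, hone, hone]

theorem sq_eq_conj_of_adjoin_eq_top (S : A → A) (hadd : ∀ h h' : A, S (h + h') = S h + S h')
    (hsmul : ∀ (c : R) (h : A), S (c • h) = c • S h) (hmul : ∀ h h' : A, S (h * h') = S h' * S h)
    (hone : S 1 = 1) {s : Set A} (hs : Algebra.adjoin R s = ⊤) (u : Aˣ)
    (hgen : ∀ z ∈ s, S (S z) = ↑u⁻¹ * z * u) (h : A) : S (S h) = ↑u⁻¹ * h * u := by
  have hconj : AlgHom.sqOfAntiMul S hadd hsmul hmul hone =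
      MulSemiringAction.toAlgHom R A (ConjAct.toConjAct u⁻¹) :=
    AlgHom.ext_of_adjoin_eq_top hs fun z hz => by
      simpa [ConjAct.units_smul_def] using hgen z hz
  simpa [ConjAct.units_smul_def] using DFunLike.congr_fun hconj h

end AntiMultiplicative

theorem Units.inv_mul_mul_eq_smul {R A : Type*} [CommSemiring R] [Semiring A] [Algebra R A]
    {u : Aˣ} {c : Rˣ} {y : A} (h : ↑u * y = ((c⁻¹ : Rˣ) : R) • (y * u)) :
    ↑u⁻¹ * y * u = (c : R) • y := by
  have hyu : y * u = (c : R) • (↑u * y) := by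
    rw [h, smul_smul, Units.mul_inv, one_smul]
  rw [mul_assoc, hyu, mul_smul_comm, Units.inv_mul_cancel_left]

theorem sq_eq_inv_mul_mul_of_eq_neg_inv_mul {A : Type*} [Ring A] {S : A → A}
    (hneg : ∀ h : A, S (-h) = -S h) (hmul : ∀ h h' : A, S (h * h') = S h' * S h)
    {u : Aˣ} (hu : S ↑u⁻¹ = u) {z : A} (hz : S z = -(↑u⁻¹ * z)) :
    S (S z) = ↑u⁻¹ * z * u := by
  rw [hz, hneg, hmul, hz, hu, neg_mul, neg_neg]

theorem antipode_squared_inner_general (k : Type*) [Field k]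
    (G : Type*) [CommGroup G]
    (H : Type*) [Ring H] [Algebra k H]
    (ι : G →* Hˣ) (x y : H) (χ : G →* kˣ) (a b : G)
    (hab : χ a = χ b)
    (hgy : ∀ g : G, ((ι g : Hˣ) : H) * y = (((χ g)⁻¹ : kˣ) : k) • (y * ((ι g : Hˣ) : H)))
    (hgen : Algebra.adjoin k
      ({x, y} ∪ Set.range fun g : G => ((ι g : Hˣ) : H)) = ⊤)
    (S : H → H)
    (hSadd : ∀ h h' : H, S (h + h') = S h + S h')
    (hSsmul : ∀ (c : k) (h : H), S (c • h) = c • S h)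
    (hSmul : ∀ h h' : H, S (h * h') = S h' * S h)
    (hSx : S x = -((((ι a)⁻¹ : Hˣ) : H) * x))
    (hSy : S y = -((((ι b)⁻¹ : Hˣ) : H) * y))
    (hSg : ∀ g : G, S ((ι g : Hˣ) : H) = ((ι g⁻¹ : Hˣ) : H)) :
    ∀ h : H, S (S h) = (((ι a)⁻¹ : Hˣ) : H) * h * ((ι a : Hˣ) : H) := by
  have hSneg (h : H) : S (-h) = -S h := by rw [← neg_one_smul k h, hSsmul, neg_one_smul]
  have hSinv (g : G) : S ↑(ι g)⁻¹ = ι g := by rw [← map_inv, hSg, inv_inv]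
  have hSone : S 1 = 1 := by simpa using hSg 1
  refine sq_eq_conj_of_adjoin_eq_top S hSadd hSsmul hSmul hSone hgen (ι a) ?_
  rintro z ((rfl | rfl) | ⟨g, rfl⟩)
  · exact sq_eq_inv_mul_mul_of_eq_neg_inv_mul hSneg hSmul (hSinv a) hSx
  · rw [sq_eq_inv_mul_mul_of_eq_neg_inv_mul hSneg hSmul (hSinv b) hSy,
      Units.inv_mul_mul_eq_smul (hgy b), Units.inv_mul_mul_eq_smul (hgy a), hab]
  · rw [hSg, hSg, inv_inv, mul_assoc, ← Units.val_mul, ← map_mul, mul_comm, map_mul,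
      Units.val_mul, Units.inv_mul_cancel_left]

/-- In a linked lifting `H` of a quantum plane, the square of the antipode is inner:
`S²(h) = a⁻¹ h a` for all `h ∈ H`. -/
theorem antipode_squared_inner (k : Type*) [Field k] [IsAlgClosed k] [CharZero k]
    (G : Type*) [CommGroup G] [Fintype G]
    (H : Type*) [Ring H] [Algebra k H]
    (ι : G →* Hˣ) (x y : H) (χ : G →* kˣ) (a b : G)
    (q : k) (hq : q = (((χ a)⁻¹ : kˣ) : k)) (hab : χ a = χ b)
    (γ : k) (hγ : γ ≠ 0)
    (hgx : ∀ g : G, ((ι g : Hˣ) : H) * x = ((χ g : kˣ) : k) • (x * ((ι g : Hˣ) : H)))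
    (hgy : ∀ g : G, ((ι g : Hˣ) : H) * y = (((χ g)⁻¹ : kˣ) : k) • (y * ((ι g : Hˣ) : H)))
    (hxy : x * y - q • (y * x) = γ • (((ι (a * b) : Hˣ) : H) - 1))
    (hgen : Algebra.adjoin k
      ({x, y} ∪ Set.range fun g : G => ((ι g : Hˣ) : H)) = ⊤)
    (S : H → H)
    (hSadd : ∀ h h' : H, S (h + h') = S h + S h')
    (hSsmul : ∀ (c : k) (h : H), S (c • h) = c • S h)
    (hSmul : ∀ h h' : H, S (h * h') = S h' * S h)
    (hSx : S x = -((((ι a)⁻¹ : Hˣ) : H) * x))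
    (hSy : S y = -((((ι b)⁻¹ : Hˣ) : H) * y))
    (hSg : ∀ g : G, S ((ι g : Hˣ) : H) = ((ι g⁻¹ : Hˣ) : H)) :
    ∀ h : H, S (S h) = (((ι a)⁻¹ : Hˣ) : H) * h * ((ι a : Hˣ) : H) :=
  antipode_squared_inner_general k G H ι x y χ a b hab hgy hgen S hSadd hSsmul hSmul hSx hSy hSg
end

section
/- Let θ be a primitive N-th root of unity, N = nm, q = θ^m of order n, κ ∈ kˣ, and R_{κ,N} = {ρ : ρ^N = κ}. Call ρ exceptional if ρ^{2m} = q^{n−1}, and for nonexceptional ρ with ρ^{2m} = q^{e(ρ)} (0 ≤ e(ρ) ≤ n−2) define σ(ρ) = θ^{−(e(ρ)+1)}ρ; set σ(ρ) = ρ for exceptional ρ. Then σ is a permutation of the set of ρ ∈ R_{κ,N} with ρ^{2m} ∈ ⟨q⟩, σ has order 2m on nonexceptional orbits, σ²(ρ) = θ^{−n}ρ, and σ^{−1}(ρ) = θ^{n−e(ρ)−1}ρ; every orbit has size 2m or 1. -/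
/-!
Multiplying `ρ` by `θ^a` multiplies `ρ^{2m}` by `q^{2a}`. So for nonexceptional `ρ` with
exponent `e ≤ n - 2`, both `σ(ρ) = θ^{-(e+1)}ρ` and `θ^{n-e-1}ρ` have exponent `-e-2 ≡ n-e-2`,
again nonexceptional; hence `σ(σ(ρ)) = θ^{-(n-e-1)}θ^{-(e+1)}ρ = θ^{-n}ρ`, and `σ` and
`ρ ↦ θ^{n-e-1}ρ` are mutually inverse. Multiplication by `θ^{-n}` leaves `ρ^{2m}` unchanged, so it
commutes with `σ`, and the iterates are `σ^{2j}ρ = θ^{-nj}ρ`, `σ^{2j+1}ρ = θ^{-(nj+e+1)}ρ`; for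
`0 < i < 2m` the exponent lies strictly between `0` and `nm = ord θ`.
-/

/-- The exponent `e(ρ)`, the least `e` with `ρ^{2m} = q^e` (or `0` if none exists). -/
noncomputable def eexp (k : Type*) [Field k] (q : kˣ) (m : ℕ) (ρ : kˣ) : ℕ := by
  classical exact if h : ∃ e : ℕ, ρ ^ (2 * m) = q ^ e then Nat.find h else 0

/-- The 'Weyl group' permutation `σ`: `σ(ρ) = θ^{−(e(ρ)+1)}ρ` for nonexceptional `ρ`
(`e(ρ) ≠ n−1`) and `σ(ρ) = ρ` for exceptional `ρ`. -/
noncomputable def sigmaMap (k : Type*) [Field k] (θ q : kˣ) (n m : ℕ) (ρ : kˣ) : kˣ :=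
  if eexp k q m ρ = n - 1 then ρ else θ⁻¹ ^ (eexp k q m ρ + 1) * ρ

section GroupFacts

variable {G : Type*}

lemma orderOf_pow_of_orderOf_eq_mul [Monoid G] {θ : G} {n m : ℕ} (hθ : orderOf θ = n * m)
    (hm : 0 < m) : orderOf (θ ^ m) = n := by
  rw [orderOf_pow_of_dvd hm.ne' (hθ ▸ dvd_mul_left m n), hθ, Nat.mul_div_cancel n hm]

variable [CommGroup G]

lemma zpow_mul_pow_orderOf (θ ρ : G) (a : ℤ) : (θ ^ a * ρ) ^ orderOf θ = ρ ^ orderOf θ := by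
  rw [mul_pow, ← zpow_natCast (θ ^ a), ← zpow_mul, mul_comm a, zpow_mul, zpow_natCast,
    pow_orderOf_eq_one, one_zpow, one_mul]

lemma zpow_mul_pow_two_mul (θ ρ : G) (a : ℤ) (m : ℕ) :
    (θ ^ a * ρ) ^ (2 * m) = (θ ^ m) ^ (2 * a) * ρ ^ (2 * m) := by
  rw [mul_pow, ← zpow_natCast, ← zpow_mul, ← zpow_natCast θ m, ← zpow_mul]
  congr 2
  push_cast
  ring

lemma zpow_neg_mul_ne_self {θ : G} {a : ℕ} (ha : 0 < a) (hlt : a < orderOf θ) (ρ : G) :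
    θ ^ (-(a : ℤ)) * ρ ≠ ρ := by
  rw [Ne, mul_eq_right, zpow_neg, inv_eq_one, zpow_natCast]
  exact pow_ne_one_of_lt_orderOf ha.ne' hlt

lemma zpow_mul_pow_two_mul_eq_one {θ : G} {n m : ℕ} (hq : orderOf (θ ^ m) = n) (j : ℤ) :
    (θ ^ (n * j)) ^ (2 * m) = 1 := by
  calc (θ ^ (n * j)) ^ (2 * m) = ((θ ^ m) ^ n) ^ (2 * j) := by
        simp only [← zpow_natCast, ← zpow_mul]
        push_cast
        ring_nf
    _ = 1 := by rw [← hq, pow_orderOf_eq_one, one_zpow]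

end GroupFacts

lemma natCast_sub_sub_one_modEq {n e : ℕ} (h : e + 1 ≤ n) :
    ((n - e - 1 : ℕ) : ℤ) ≡ -(e + 1) [ZMOD n] :=
  Int.modEq_iff_dvd.mpr ⟨-1, by omega⟩

section Exponent

variable {k : Type*} [Field k] {q ρ : kˣ} {m : ℕ}

lemma eexp_eq_mod_orderOf {e : ℕ} (h : ρ ^ (2 * m) = q ^ e) :
    eexp k q m ρ = e % orderOf q := by
  classical
  have hex : ∃ e : ℕ, ρ ^ (2 * m) = q ^ e := ⟨e, h⟩
  have hle : Nat.find hex ≤ e % orderOf q := Nat.find_min' hex (by rw [pow_mod_orderOf, h])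
  have hmod : Nat.find hex % orderOf q = e % orderOf q :=
    pow_eq_pow_iff_modEq.mp ((Nat.find_spec hex).symm.trans h)
  rw [eexp, dif_pos hex]
  exact le_antisymm hle (hmod ▸ Nat.mod_le _ _)

lemma pow_two_mul_eq_pow_eexp (h : ∃ e : ℕ, ρ ^ (2 * m) = q ^ e) :
    ρ ^ (2 * m) = q ^ eexp k q m ρ := by
  obtain ⟨e, h⟩ := h
  rw [eexp_eq_mod_orderOf h, pow_mod_orderOf, h]

lemma eexp_eq_of_lt {e : ℕ} (h : ρ ^ (2 * m) = q ^ e) (he : e < orderOf q) :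
    eexp k q m ρ = e := by
  rw [eexp_eq_mod_orderOf h, Nat.mod_eq_of_lt he]

lemma eexp_lt_orderOf (hq : 0 < orderOf q) : eexp k q m ρ < orderOf q := by
  by_cases h : ∃ e : ℕ, ρ ^ (2 * m) = q ^ e
  · obtain ⟨e, h⟩ := h
    rw [eexp_eq_mod_orderOf h]
    exact Nat.mod_lt e hq
  · simpa [eexp, h] using hq

lemma eexp_mul_of_pow_eq_one {c : kˣ} (hc : c ^ (2 * m) = 1) :
    eexp k q m (c * ρ) = eexp k q m ρ := by
  rw [eexp, eexp, mul_pow, hc, one_mul]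

end Exponent

noncomputable def sigmaInvMap (k : Type*) [Field k] (θ q : kˣ) (n m : ℕ) (ρ : kˣ) : kˣ :=
  if eexp k q m ρ = n - 1 then ρ else θ ^ (n - eexp k q m ρ - 1) * ρ

section Weyl

variable {k : Type*} [Field k] {θ ρ : kˣ} {n m : ℕ}

local notation "σ" => sigmaMap k θ (θ ^ m) n m
local notation "τ" => sigmaInvMap k θ (θ ^ m) n m
local notation "e(" x ")" => eexp k (θ ^ m) m x

lemma sigmaMap_of_eq (h : e(ρ) = n - 1) : σ ρ = ρ := if_pos h

lemma sigmaInvMap_of_eq (h : e(ρ) = n - 1) : τ ρ = ρ := if_pos h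

lemma sigmaMap_of_ne (h : e(ρ) ≠ n - 1) : σ ρ = θ ^ (-(e(ρ) + 1 : ℤ)) * ρ := by
  rw [sigmaMap, if_neg h, inv_pow, ← zpow_natCast, ← zpow_neg]
  push_cast
  rfl

lemma sigmaInvMap_of_ne (h : e(ρ) ≠ n - 1) : τ ρ = θ ^ ((n - e(ρ) - 1 : ℕ) : ℤ) * ρ := by
  rw [sigmaInvMap, if_neg h, zpow_natCast]

lemma sigmaMap_mul_of_pow_eq_one {c : kˣ} (hc : c ^ (2 * m) = 1) : σ (c * ρ) = c * σ ρ := by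
  simp only [sigmaMap, eexp_mul_of_pow_eq_one hc]
  split_ifs
  · rfl
  · exact mul_left_comm _ _ _

lemma eexp_add_two_le (hq : orderOf (θ ^ m) = n) (hn : 0 < n) (hne : e(ρ) ≠ n - 1) :
    e(ρ) + 2 ≤ n := by
  have := eexp_lt_orderOf (m := m) (ρ := ρ) (hq ▸ hn)
  omega

lemma zpow_mul_pow_two_mul_of_modEq (hq : orderOf (θ ^ m) = n) (hn : 0 < n)
    (hρ : ∃ e : ℕ, ρ ^ (2 * m) = (θ ^ m) ^ e) (hne : e(ρ) ≠ n - 1) {a : ℤ}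
    (ha : a ≡ -(e(ρ) + 1) [ZMOD n]) :
    (θ ^ a * ρ) ^ (2 * m) = (θ ^ m) ^ (n - e(ρ) - 2) := by
  have he := eexp_add_two_le hq hn hne
  rw [zpow_mul_pow_two_mul, pow_two_mul_eq_pow_eexp hρ, ← zpow_natCast _ e(ρ),
    ← zpow_natCast _ (n - e(ρ) - 2), ← zpow_add, zpow_eq_zpow_iff_modEq, hq,
    Int.modEq_iff_dvd]
  have hcast : ((n - e(ρ) - 2 : ℕ) : ℤ) = n - e(ρ) - 2 := by omega
  rw [hcast, show (n : ℤ) - e(ρ) - 2 - (2 * a + e(ρ)) = n + 2 * (-(e(ρ) + 1) - a) by ring]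
  exact dvd_add dvd_rfl (Dvd.dvd.mul_left (Int.modEq_iff_dvd.mp ha) 2)

lemma eexp_zpow_mul_of_modEq (hq : orderOf (θ ^ m) = n) (hn : 0 < n)
    (hρ : ∃ e : ℕ, ρ ^ (2 * m) = (θ ^ m) ^ e) (hne : e(ρ) ≠ n - 1) {a : ℤ}
    (ha : a ≡ -(e(ρ) + 1) [ZMOD n]) :
    e(θ ^ a * ρ) = n - e(ρ) - 2 := by
  have := eexp_add_two_le hq hn hne
  exact eexp_eq_of_lt (zpow_mul_pow_two_mul_of_modEq hq hn hρ hne ha) (by omega)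

lemma sigmaMap_zpow_mul_of_modEq (hq : orderOf (θ ^ m) = n) (hn : 0 < n)
    (hρ : ∃ e : ℕ, ρ ^ (2 * m) = (θ ^ m) ^ e) (hne : e(ρ) ≠ n - 1) {a : ℤ}
    (ha : a ≡ -(e(ρ) + 1) [ZMOD n]) :
    σ (θ ^ a * ρ) = θ ^ (a + e(ρ) + 1 - n) * ρ := by
  have he := eexp_add_two_le hq hn hne
  have ha' := eexp_zpow_mul_of_modEq hq hn hρ hne ha
  rw [sigmaMap_of_ne (by omega), ← mul_assoc, ← zpow_add, ha']
  congr 2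
  omega

lemma sigmaMap_sigmaMap (hq : orderOf (θ ^ m) = n) (hn : 0 < n)
    (hρ : ∃ e : ℕ, ρ ^ (2 * m) = (θ ^ m) ^ e) (hne : e(ρ) ≠ n - 1) :
    σ (σ ρ) = θ ^ (-(n : ℤ)) * ρ := by
  rw [sigmaMap_of_ne hne, sigmaMap_zpow_mul_of_modEq hq hn hρ hne Int.ModEq.rfl]
  ring_nf

lemma sigmaMap_pow_sub_mul (hq : orderOf (θ ^ m) = n) (hn : 0 < n)
    (hρ : ∃ e : ℕ, ρ ^ (2 * m) = (θ ^ m) ^ e) (hne : e(ρ) ≠ n - 1) :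
    σ (θ ^ (n - e(ρ) - 1) * ρ) = ρ := by
  have he := eexp_add_two_le hq hn hne
  rw [← zpow_natCast θ (n - e(ρ) - 1), sigmaMap_zpow_mul_of_modEq hq hn hρ hne
    (natCast_sub_sub_one_modEq (by omega)),
    show ((n - e(ρ) - 1 : ℕ) : ℤ) + e(ρ) + 1 - n = 0 by omega, zpow_zero, one_mul]

lemma sigmaInvMap_sigmaMap (hq : orderOf (θ ^ m) = n) (hn : 0 < n)
    (hρ : ∃ e : ℕ, ρ ^ (2 * m) = (θ ^ m) ^ e) (hne : e(ρ) ≠ n - 1) :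
    τ (σ ρ) = ρ := by
  have he := eexp_add_two_le hq hn hne
  have hσ := eexp_zpow_mul_of_modEq hq hn hρ hne Int.ModEq.rfl
  rw [sigmaMap_of_ne hne, sigmaInvMap_of_ne (by omega), ← mul_assoc, ← zpow_add, hσ,
    show ((n - (n - e(ρ) - 2) - 1 : ℕ) : ℤ) + -(e(ρ) + 1) = 0 by omega, zpow_zero, one_mul]

lemma zpow_mul_mem_of_modEq {κ : kˣ} (hθ : orderOf θ = n * m) (hq : orderOf (θ ^ m) = n)
    (hn : 0 < n) (hκ : ρ ^ (n * m) = κ) (hρ : ∃ e : ℕ, ρ ^ (2 * m) = (θ ^ m) ^ e)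
    (hne : e(ρ) ≠ n - 1) {a : ℤ} (ha : a ≡ -(e(ρ) + 1) [ZMOD n]) :
    (θ ^ a * ρ) ^ (n * m) = κ ∧ ∃ e : ℕ, (θ ^ a * ρ) ^ (2 * m) = (θ ^ m) ^ e :=
  ⟨by rw [← hθ, zpow_mul_pow_orderOf, hθ, hκ], _, zpow_mul_pow_two_mul_of_modEq hq hn hρ hne ha⟩

lemma bijOn_sigmaMap (hθ : orderOf θ = n * m) (hq : orderOf (θ ^ m) = n) (hn : 0 < n)
    (κ : kˣ) :
    Set.BijOn σ {ρ : kˣ | ρ ^ (n * m) = κ ∧ ∃ e : ℕ, ρ ^ (2 * m) = (θ ^ m) ^ e}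
      {ρ : kˣ | ρ ^ (n * m) = κ ∧ ∃ e : ℕ, ρ ^ (2 * m) = (θ ^ m) ^ e} := by
  refine Set.InvOn.bijOn (f' := τ) ⟨fun ρ hρS => ?_, fun ρ hρS => ?_⟩ (fun ρ hρS => ?_)
    (fun ρ hρS => ?_) <;> obtain ⟨hκ, hρ⟩ := hρS <;> by_cases hne : e(ρ) = n - 1
  · rw [sigmaMap_of_eq hne, sigmaInvMap_of_eq hne]
  · exact sigmaInvMap_sigmaMap hq hn hρ hne
  · rw [sigmaInvMap_of_eq hne, sigmaMap_of_eq hne]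
  · rw [sigmaInvMap, if_neg hne]
    exact sigmaMap_pow_sub_mul hq hn hρ hne
  · rw [sigmaMap_of_eq hne]
    exact ⟨hκ, hρ⟩
  · rw [sigmaMap_of_ne hne]
    exact zpow_mul_mem_of_modEq hθ hq hn hκ hρ hne Int.ModEq.rfl
  · rw [sigmaInvMap_of_eq hne]
    exact ⟨hκ, hρ⟩
  · have he := eexp_add_two_le hq hn hne
    rw [sigmaInvMap_of_ne hne]
    exact zpow_mul_mem_of_modEq hθ hq hn hκ hρ hne (natCast_sub_sub_one_modEq (by omega))

lemma iterate_two_mul_sigmaMap (hq : orderOf (θ ^ m) = n) (hn : 0 < n)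
    (hρ : ∃ e : ℕ, ρ ^ (2 * m) = (θ ^ m) ^ e) (hne : e(ρ) ≠ n - 1) (j : ℕ) :
    σ^[2 * j] ρ = θ ^ (-((n * j : ℕ) : ℤ)) * ρ := by
  induction j with
  | zero => simp
  | succ j ih =>
    have hcomm : Function.Commute σ (θ ^ (-(n : ℤ)) * ·) := fun x =>
      sigmaMap_mul_of_pow_eq_one (by simpa using zpow_mul_pow_two_mul_eq_one hq (-1))
    have hshift := hcomm.iterate_left (2 * j) ρ
    beta_reduce at hshift
    rw [mul_add_one, Function.iterate_add_apply]
    show σ^[2 * j] (σ (σ ρ)) = _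
    rw [sigmaMap_sigmaMap hq hn hρ hne, hshift, ih, ← mul_assoc, ← zpow_add]
    push_cast
    ring_nf

lemma iterate_two_mul_add_one_sigmaMap (hq : orderOf (θ ^ m) = n) (hn : 0 < n)
    (hρ : ∃ e : ℕ, ρ ^ (2 * m) = (θ ^ m) ^ e) (hne : e(ρ) ≠ n - 1) (j : ℕ) :
    σ^[2 * j + 1] ρ = θ ^ (-((n * j + e(ρ) + 1 : ℕ) : ℤ)) * ρ := by
  rw [Function.iterate_succ_apply', iterate_two_mul_sigmaMap hq hn hρ hne,
    sigmaMap_mul_of_pow_eq_one (by simpa using zpow_mul_pow_two_mul_eq_one hq (-(j : ℤ))),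
    sigmaMap_of_ne hne, ← mul_assoc, ← zpow_add]
  push_cast
  ring_nf

lemma iterate_sigmaMap_ne_self (hθ : orderOf θ = n * m) (hq : orderOf (θ ^ m) = n) (hn : 0 < n)
    (hρ : ∃ e : ℕ, ρ ^ (2 * m) = (θ ^ m) ^ e) (hne : e(ρ) ≠ n - 1) {i : ℕ} (hi0 : 0 < i)
    (hi : i < 2 * m) : σ^[i] ρ ≠ ρ := by
  have he := eexp_add_two_le hq hn hne
  obtain ⟨j, rfl | rfl⟩ := Nat.even_or_odd' i
  · have hj : n * j < n * m := Nat.mul_lt_mul_of_pos_left (by omega) hn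
    rw [iterate_two_mul_sigmaMap hq hn hρ hne]
    exact zpow_neg_mul_ne_self (Nat.mul_pos hn (by omega)) (hθ ▸ hj) ρ
  · have hj : n * (j + 1) ≤ n * m := Nat.mul_le_mul_left n (by omega)
    rw [iterate_two_mul_add_one_sigmaMap hq hn hρ hne]
    exact zpow_neg_mul_ne_self (by omega) (by rw [hθ]; linarith) ρ

end Weyl

theorem weyl_group_action_general (k : Type*) [Field k]
    (n m : ℕ) (hn : 2 ≤ n) (hm : 0 < m)
    (θ q κ : kˣ) (hθ : orderOf θ = n * m) (hq : q = θ ^ m) :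
    Set.BijOn (sigmaMap k θ q n m)
      {ρ : kˣ | ρ ^ (n * m) = κ ∧ ∃ e : ℕ, ρ ^ (2 * m) = q ^ e}
      {ρ : kˣ | ρ ^ (n * m) = κ ∧ ∃ e : ℕ, ρ ^ (2 * m) = q ^ e} ∧
    (∀ ρ : kˣ, ρ ^ (n * m) = κ → (∃ e : ℕ, ρ ^ (2 * m) = q ^ e) →
      eexp k q m ρ ≠ n - 1 →
        ((sigmaMap k θ q n m)^[2] ρ = θ⁻¹ ^ n * ρ ∧
         (sigmaMap k θ q n m)^[2 * m] ρ = ρ ∧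
         (∀ j : ℕ, 0 < j → j < 2 * m → (sigmaMap k θ q n m)^[j] ρ ≠ ρ) ∧
         sigmaMap k θ q n m (θ ^ (n - eexp k q m ρ - 1) * ρ) = ρ)) ∧
    (∀ ρ : kˣ, ρ ^ (n * m) = κ → eexp k q m ρ = n - 1 → sigmaMap k θ q n m ρ = ρ) := by
  subst hq
  have hq : orderOf (θ ^ m) = n := orderOf_pow_of_orderOf_eq_mul hθ hm
  have hn0 : 0 < n := by omega
  refine ⟨bijOn_sigmaMap hθ hq hn0 κ, fun ρ _ hρ hne => ⟨?_, ?_, ?_, ?_⟩,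
    fun ρ _ => sigmaMap_of_eq⟩
  · simpa using iterate_two_mul_sigmaMap hq hn0 hρ hne 1
  · rw [iterate_two_mul_sigmaMap hq hn0 hρ hne, ← hθ, zpow_neg, zpow_natCast,
      pow_orderOf_eq_one, inv_one, one_mul]
  · exact fun j hj hjm => iterate_sigmaMap_ne_self hθ hq hn0 hρ hne hj hjm
  · exact sigmaMap_pow_sub_mul hq hn0 hρ hne

/-- Lemma 4.15: `σ` is a permutation of `{ρ ∈ R_{κ,N} : ρ^{2m} ∈ ⟨q⟩}`;
on nonexceptional roots, `σ² = θ^{−n}·id`, `σ` has order `2m`, and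
`σ⁻¹(ρ) = θ^{n−e(ρ)−1}ρ`; the orbits have size `2m` or `1`. -/
theorem weyl_group_action (k : Type*) [Field k] [IsAlgClosed k] [CharZero k]
    (n m : ℕ) (hn : 2 ≤ n) (hm : 0 < m)
    (θ q κ : kˣ) (hθ : orderOf θ = n * m) (hq : q = θ ^ m) :
    Set.BijOn (sigmaMap k θ q n m)
      {ρ : kˣ | ρ ^ (n * m) = κ ∧ ∃ e : ℕ, ρ ^ (2 * m) = q ^ e}
      {ρ : kˣ | ρ ^ (n * m) = κ ∧ ∃ e : ℕ, ρ ^ (2 * m) = q ^ e} ∧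
    (∀ ρ : kˣ, ρ ^ (n * m) = κ → (∃ e : ℕ, ρ ^ (2 * m) = q ^ e) →
      eexp k q m ρ ≠ n - 1 →
        ((sigmaMap k θ q n m)^[2] ρ = θ⁻¹ ^ n * ρ ∧
         (sigmaMap k θ q n m)^[2 * m] ρ = ρ ∧
         (∀ j : ℕ, 0 < j → j < 2 * m → (sigmaMap k θ q n m)^[j] ρ ≠ ρ) ∧
         sigmaMap k θ q n m (θ ^ (n - eexp k q m ρ - 1) * ρ) = ρ)) ∧
    (∀ ρ : kˣ, ρ ^ (n * m) = κ → eexp k q m ρ = n - 1 → sigmaMap k θ q n m ρ = ρ) :=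
  weyl_group_action_general k n m hn hm θ q κ hθ hq
end

section
/- Let H be the k-algebra generated by a finite abelian group G and elements x, y with relations gx = χ₁(g)xg, gy = χ₂(g)yg, xy = χ₂(a)yx, x^{n₁} = 0, y^{n₂} = 0 (the nilpotent unlinked lifting), where n_i = |χ_i(a_i)| > 1. Then the Jacobson radical of H is J = xH + yH, the simple modules are the one-dimensional modules L_λ = He_λ/Je_λ indexed by characters λ of G, and J e_λ / J² e_λ ≅ L_{λχ₁} ⊕ L_{λχ₂} as H-modules. -/
/-- The minimal idempotent `e_λ` of the group algebra `kG`. -/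
noncomputable def stdIdem (k : Type*) [Field k] (G : Type*) [CommGroup G] [Fintype G]
    (lam : G →* kˣ) : MonoidAlgebra k G :=
  (Fintype.card G : k)⁻¹ • ∑ g : G, MonoidAlgebra.single g ((lam g⁻¹ : kˣ) : k)

/-!
The monomials `g xⁱ yʲ` multiply like monomials up to nonzero scalars, so the spans `J_m` of the
monomials of total degree `≥ m` form a multiplicative filtration with `J₀ = H` and
`J_{n₁+n₂} = 0`. Hence `J₁ = Hx + Hy` is a nil ideal, so it lies in the Jacobson radical.
Conversely, the degree-`0` coefficient is an algebra map `H → kG` with kernel `J₁`; composed with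
the characters of `G` it gives maximal ideals, and their intersection is `J₁` because the
characters separate the elements of `kG`.

For the modules: `e_λ` is a weight vector of weight `λ` for `kG`, and `x e_λ = e_{λχ₁} x`,
`y e_λ = e_{λχ₂} y`. Writing `r ∈ H` as `φ(r₀) + j` with `j ∈ Hx + Hy` reduces `H w` to
`k w + H x w + H y w` for each weight vector `w`, and `e_λ ∉ J₁`, `x e_λ, y e_λ ∉ J₂` are read off
from the basis coefficients.
-/

section SkewCommute

variable {R A : Type*} [CommSemiring R] [Semiring A] [Algebra R A] {a b : A} {c : R}

theorem mul_pow_eq_smul_of_mul_eq_smul (h : a * b = c • (b * a)) (n : ℕ) :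
    a * b ^ n = c ^ n • (b ^ n * a) := by
  induction n with
  | zero => simp
  | succ n ih =>
    rw [pow_succ, ← mul_assoc, ih, smul_mul_assoc, mul_assoc, h, mul_smul_comm, smul_smul,
      ← mul_assoc, ← pow_succ, pow_succ]

theorem pow_mul_pow_eq_smul_of_mul_eq_smul (h : a * b = c • (b * a)) (m n : ℕ) :
    a ^ m * b ^ n = c ^ (m * n) • (b ^ n * a ^ m) := by
  induction m with
  | zero => simp
  | succ m ih =>
    rw [pow_succ, mul_assoc, mul_pow_eq_smul_of_mul_eq_smul h, mul_smul_comm, ← mul_assoc, ih,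
      smul_mul_assoc, smul_smul, mul_assoc, ← pow_succ, ← pow_add, Nat.succ_mul, add_comm n]

theorem pow_mul_mul_eq_smul_of_mul_eq_smul (h : a * b = c • (b * a)) (m n : ℕ) (t : A) :
    a ^ m * (b ^ n * t) = c ^ (m * n) • (b ^ n * (a ^ m * t)) := by
  rw [← mul_assoc, pow_mul_pow_eq_smul_of_mul_eq_smul h, smul_mul_assoc, mul_assoc]

theorem mul_eq_inv_smul_of_mul_eq_smul_s17 {u : Rˣ} (h : a * b = (u : R) • (b * a)) :
    b * a = ((u⁻¹ : Rˣ) : R) • (a * b) := by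
  rw [h, smul_smul, Units.inv_mul, one_smul]

end SkewCommute

theorem Ideal.le_jacobson_bot_of_forall_isNilpotent {R : Type*} [Ring R] {I : Ideal R}
    (h : ∀ z ∈ I, IsNilpotent z) : I ≤ (⊥ : Ideal R).jacobson := by
  intro z hz
  refine Ideal.mem_jacobson_iff.2 fun r => ?_
  obtain ⟨u, hu⟩ := (h _ (I.mul_mem_left r hz)).isUnit_add_one
  refine ⟨↑u⁻¹, ?_⟩
  rw [Ideal.mem_bot, mul_assoc, ← mul_add_one, ← hu, Units.inv_mul, sub_self]

namespace UnlinkedLifting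

open MonoidAlgebra

section GroupAlgebra

variable {k G : Type*} [Field k] [CommGroup G]

noncomputable abbrev charAlgHom (lam : G →* kˣ) : MonoidAlgebra k G →ₐ[k] k :=
  lift k k G ((Units.coeHom k).comp lam)

theorem charAlgHom_single (lam : G →* kˣ) (g : G) (c : k) :
    charAlgHom lam (single g c) = c * lam g := by
  simp

theorem eq_zero_of_forall_charAlgHom_eq_zero [Fintype G]
    [HasEnoughRootsOfUnity k (Monoid.exponent G)] {p : MonoidAlgebra k G}
    (hp : ∀ lam : G →* kˣ, charAlgHom lam p = 0) : p = 0 := by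
  let ev : G → ((G →* kˣ) →* k) := fun g => (Units.coeHom k).comp (MonoidHom.eval g)
  have hev : Function.Injective ev := fun g g' hgg' =>
    (CommGroup.forall_apply_eq_apply_iff G).1 fun lam => Units.ext (DFunLike.congr_fun hgg' lam)
  have hli := (linearIndependent_monoidHom (G →* kˣ) k).comp ev hev
  refine coeff_injective (Finsupp.ext fun g => Fintype.linearIndependent_iff.1 hli _ ?_ g)
  funext lam
  simpa [lift_apply, Finsupp.sum_fintype, ev] using hp lam

variable [Fintype G]

theorem mul_stdIdem (lam : G →* kˣ) (p : MonoidAlgebra k G) :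
    p * stdIdem k G lam = charAlgHom lam p • stdIdem k G lam := by
  induction p using MonoidAlgebra.induction_linear with
  | zero => simp
  | add p q hp hq => rw [add_mul, hp, hq, map_add, add_smul]
  | single g c =>
    simp only [stdIdem, Finset.mul_sum, single_mul_single, charAlgHom_single, Finset.smul_sum,
      smul_single']
    refine Fintype.sum_equiv (Equiv.mulLeft g) _ _ fun h => ?_
    simp only [Equiv.coe_mulLeft, mul_inv_rev, map_mul, Units.val_mul, map_inv]
    congr 1
    field_simp
    rw [mul_assoc c, Units.mul_inv, mul_one]

theorem stdIdem_ne_zero [CharZero k] (lam : G →* kˣ) : stdIdem k G lam ≠ 0 := by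
  have h : charAlgHom lam (stdIdem k G lam) = 1 := by simp [stdIdem, map_sum]
  exact fun h0 => by simp [h0] at h

end GroupAlgebra

variable {k G H : Type*} [Field k] [CommGroup G] [Ring H] [Algebra k H]
  {φ : MonoidAlgebra k G →ₐ[k] H} {x y : H}

variable (φ) in
def IsWeightVector (μ : G →* kˣ) (w : H) : Prop :=
  ∀ p, φ p * w = charAlgHom μ p • w

theorem isWeightVector_phi_stdIdem_mul [Fintype G] (μ : G →* kˣ) (v : H) :
    IsWeightVector φ μ (φ (stdIdem k G μ) * v) := fun p => by
  rw [← mul_assoc, ← map_mul, mul_stdIdem, map_smul, smul_mul_assoc]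

theorem mul_phi_stdIdem [Fintype G] {χ : G →* kˣ}
    (hgx : ∀ g, φ (single g 1) * x = ((χ g : kˣ) : k) • (x * φ (single g 1))) (lam : G →* kˣ) :
    x * φ (stdIdem k G lam) = φ (stdIdem k G (lam * χ)) * x := by
  have hφ : ∀ g c, φ (single g c) = c • φ (single g 1) := fun g c => by
    rw [← map_smul, smul_single', mul_one]
  simp only [stdIdem, map_smul, map_sum, mul_smul_comm, smul_mul_assoc, Finset.mul_sum,
    Finset.sum_mul]
  congr 1
  refine Finset.sum_congr rfl fun g _ => ?_
  rw [hφ g (lam g⁻¹ : k), hφ g ((lam * χ) g⁻¹ : k), mul_smul_comm,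
    mul_eq_inv_smul_of_mul_eq_smul_s17 (hgx g), smul_mul_assoc, smul_smul]
  simp [mul_comm]

variable (φ x y) in
structure SkewRelations (χ₁ χ₂ : G →* kˣ) (q : kˣ) : Prop where
  grp_mul_x : ∀ g, φ (single g 1) * x = ((χ₁ g : kˣ) : k) • (x * φ (single g 1))
  grp_mul_y : ∀ g, φ (single g 1) * y = ((χ₂ g : kˣ) : k) • (y * φ (single g 1))
  x_mul_y : x * y = (q : k) • (y * x)

variable (φ x y) in
noncomputable def monomial (g : G) (i j : ℕ) : H := φ (single g 1) * x ^ i * y ^ j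

variable {χ₁ χ₂ : G →* kˣ} {q : kˣ} {n₁ n₂ : ℕ}

theorem monomial_mul_monomial (hR : SkewRelations φ x y χ₁ χ₂ q) (g h : G) (i j i' j' : ℕ) :
    ∃ c : k, monomial φ x y g i j * monomial φ x y h i' j'
      = c • monomial φ x y (g * h) (i + i') (j + j') := by
  have hyE := pow_mul_mul_eq_smul_of_mul_eq_smul
    (mul_eq_inv_smul_of_mul_eq_smul_s17 (hR.grp_mul_y h)) j 1
  have hxE := pow_mul_mul_eq_smul_of_mul_eq_smul
    (mul_eq_inv_smul_of_mul_eq_smul_s17 (hR.grp_mul_x h)) i 1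
  have hyx := pow_mul_mul_eq_smul_of_mul_eq_smul (mul_eq_inv_smul_of_mul_eq_smul_s17 hR.x_mul_y) j i'
  simp only [pow_one, mul_one] at hyE hxE
  refine ⟨?c, ?eq⟩
  case eq =>
    simp only [monomial, mul_assoc]
    rw [hyE, mul_smul_comm, mul_smul_comm, hxE, hyx]
    simp only [mul_smul_comm, smul_smul]
    rw [← mul_assoc (φ _), ← map_mul, single_mul_single, mul_one, ← mul_assoc (x ^ i), ← pow_add,
      ← pow_add]

theorem monomial_eq_zero (hxn : x ^ n₁ = 0) (hyn : y ^ n₂ = 0) {g : G} {i j : ℕ}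
    (h : n₁ ≤ i ∨ n₂ ≤ j) : monomial φ x y g i j = 0 := by
  rcases h with h | h <;> simp [monomial, pow_eq_zero_of_le h, *]

variable (φ x y) in
noncomputable def filtration (m : ℕ) : Submodule k H :=
  Submodule.span k {z | ∃ g i j, m ≤ i + j ∧ monomial φ x y g i j = z}

theorem monomial_mem_filtration {m i j : ℕ} (g : G) (h : m ≤ i + j) :
    monomial φ x y g i j ∈ filtration φ x y m :=
  Submodule.subset_span ⟨g, i, j, h, rfl⟩

theorem filtration_antitone : Antitone (filtration φ x y) := fun _ _ hmm' =>
  Submodule.span_le.2 fun _ ⟨g, _, _, h, hz⟩ => hz ▸ monomial_mem_filtration g (hmm'.trans h)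

theorem mul_mem_filtration (hR : SkewRelations φ x y χ₁ χ₂ q) {m m' : ℕ} {u v : H}
    (hu : u ∈ filtration φ x y m) (hv : v ∈ filtration φ x y m') :
    u * v ∈ filtration φ x y (m + m') := by
  have hle : filtration φ x y m * filtration φ x y m' ≤ filtration φ x y (m + m') := by
    rw [filtration, filtration, Submodule.span_mul_span, Submodule.span_le]
    rintro _ ⟨_, ⟨g, i, j, hij, rfl⟩, _, ⟨h, i', j', hij', rfl⟩, rfl⟩
    obtain ⟨c, hc⟩ := monomial_mul_monomial hR g h i j i' j'
    dsimp only [SetLike.mem_coe]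
    rw [hc]
    exact Submodule.smul_mem _ _ (monomial_mem_filtration _ (by omega))
  exact hle (Submodule.mul_mem_mul hu hv)

theorem filtration_zero
    (hspan : Submodule.span k
      (Set.range fun t : G × Fin n₁ × Fin n₂ => monomial φ x y t.1 t.2.1 t.2.2) = ⊤) :
    filtration φ x y 0 = ⊤ :=
  eq_top_iff.2 <| hspan ▸ Submodule.span_mono fun _ ⟨t, ht⟩ =>
    ⟨t.1, t.2.1, t.2.2, Nat.zero_le _, ht⟩

theorem filtration_eq_bot (hxn : x ^ n₁ = 0) (hyn : y ^ n₂ = 0) :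
    filtration φ x y (n₁ + n₂) = ⊥ :=
  eq_bot_iff.2 <| Submodule.span_le.2 <| by
    rintro _ ⟨g, i, j, hij, rfl⟩
    have hij' : n₁ ≤ i ∨ n₂ ≤ j := by omega
    simp [monomial_eq_zero hxn hyn hij']

theorem x_mem_filtration_one : x ∈ filtration φ x y 1 := by
  simpa [monomial, ← one_def] using
    monomial_mem_filtration (φ := φ) (x := x) (y := y) 1 (i := 1) (j := 0) le_rfl

theorem y_mem_filtration_one : y ∈ filtration φ x y 1 := by
  simpa [monomial, ← one_def] using
    monomial_mem_filtration (φ := φ) (x := x) (y := y) 1 (i := 0) (j := 1) le_rfl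

theorem mem_filtration_of_mem_span (hR : SkewRelations φ x y χ₁ χ₂ q)
    (hspan : Submodule.span k
      (Set.range fun t : G × Fin n₁ × Fin n₂ => monomial φ x y t.1 t.2.1 t.2.2) = ⊤)
    {m : ℕ} {s : Set H} (hs : s ⊆ filtration φ x y m) {z : H} (hz : z ∈ Submodule.span H s) :
    z ∈ filtration φ x y m := by
  induction hz using Submodule.span_induction with
  | mem z hz => exact hs hz
  | zero => exact zero_mem _
  | add _ _ _ _ hu hv => exact add_mem hu hv
  | smul r _ _ hu =>
    rw [smul_eq_mul, ← zero_add m]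
    exact mul_mem_filtration hR (by rw [filtration_zero hspan]; trivial) hu

theorem notMem_span_of_notMem_filtration_succ (hR : SkewRelations φ x y χ₁ χ₂ q)
    (hspan : Submodule.span k
      (Set.range fun t : G × Fin n₁ × Fin n₂ => monomial φ x y t.1 t.2.1 t.2.2) = ⊤)
    {m : ℕ} {w w₁ w₂ : H} (hw : w ∉ filtration φ x y (m + 1)) (hw₁ : w₁ ∈ filtration φ x y m)
    (hw₂ : w₂ ∈ filtration φ x y m) :
    w ∉ Submodule.span H {x * w₁, x * w₂, y * w₁, y * w₂} := by
  have hx : ∀ {v}, v ∈ filtration φ x y m → x * v ∈ filtration φ x y (m + 1) := fun hv => by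
    simpa [add_comm] using mul_mem_filtration hR x_mem_filtration_one hv
  have hy : ∀ {v}, v ∈ filtration φ x y m → y * v ∈ filtration φ x y (m + 1) := fun hv => by
    simpa [add_comm] using mul_mem_filtration hR y_mem_filtration_one hv
  refine fun hmem => hw (mem_filtration_of_mem_span hR hspan ?_ hmem)
  simp only [Set.insert_subset_iff, Set.singleton_subset_iff]
  exact ⟨hx hw₁, hx hw₂, hy hw₁, hy hw₂⟩

theorem mem_span_of_mem_filtration_one {z : H} (hz : z ∈ filtration φ x y 1) :
    z ∈ Submodule.span H {x, y} := by
  have hle : filtration φ x y 1 ≤ (Submodule.span H {x, y}).restrictScalars k := by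
    refine Submodule.span_le.2 ?_
    rintro _ ⟨g, i, j, hij, rfl⟩
    rw [SetLike.mem_coe, Submodule.restrictScalars_mem]
    rcases j with _ | j
    · obtain ⟨i, rfl⟩ : ∃ i', i = i' + 1 := ⟨i - 1, by omega⟩
      have h : monomial φ x y g (i + 1) 0 = (φ (single g 1) * x ^ i) • x := by
        simp [monomial, pow_succ, mul_assoc]
      exact h ▸ Submodule.smul_mem _ _ (Submodule.subset_span (by simp))
    · have h : monomial φ x y g i (j + 1) = (φ (single g 1) * x ^ i * y ^ j) • y := by
        simp [monomial, pow_succ, mul_assoc]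
      exact h ▸ Submodule.smul_mem _ _ (Submodule.subset_span (by simp))
  exact hle hz

theorem isNilpotent_of_mem_filtration_one (hR : SkewRelations φ x y χ₁ χ₂ q)
    (hxn : x ^ n₁ = 0) (hyn : y ^ n₂ = 0) {z : H} (hz : z ∈ filtration φ x y 1) :
    IsNilpotent z := by
  have hpow : ∀ n, z ^ (n + 1) ∈ filtration φ x y (n + 1) := by
    intro n
    induction n with
    | zero => simpa using hz
    | succ n ih => rw [pow_succ]; exact mul_mem_filtration hR ih hz
  have h := filtration_antitone (Nat.le_succ _) (hpow (n₁ + n₂))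
  exact ⟨n₁ + n₂ + 1, by simpa [filtration_eq_bot hxn hyn] using h⟩

theorem exists_sub_phi_mem_filtration_one
    (hspan : Submodule.span k
      (Set.range fun t : G × Fin n₁ × Fin n₂ => monomial φ x y t.1 t.2.1 t.2.2) = ⊤) (r : H) :
    ∃ p, r - φ p ∈ filtration φ x y 1 := by
  have hle : ⊤ ≤ LinearMap.range φ.toLinearMap ⊔ filtration φ x y 1 := by
    rw [← hspan, Submodule.span_le]
    rintro _ ⟨⟨g, i, j⟩, rfl⟩
    show monomial φ x y g i j ∈ _
    by_cases hij : (i : ℕ) + j = 0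
    · refine Submodule.mem_sup_left ⟨single g 1, ?_⟩
      simp [monomial, show (i : ℕ) = 0 by omega, show (j : ℕ) = 0 by omega]
    · exact Submodule.mem_sup_right (monomial_mem_filtration g (by omega))
  obtain ⟨_, ⟨p, rfl⟩, j, hj, hr⟩ := Submodule.mem_sup.1 (hle (Submodule.mem_top (x := r)))
  exact ⟨p, by rwa [← hr, AlgHom.toLinearMap_apply, add_sub_cancel_left]⟩

theorem IsWeightVector.exists_mul_sub_smul_mem_span
    (hspan : Submodule.span k
      (Set.range fun t : G × Fin n₁ × Fin n₂ => monomial φ x y t.1 t.2.1 t.2.2) = ⊤)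
    {μ : G →* kˣ} {w : H} (hw : IsWeightVector φ μ w) (r : H) :
    ∃ c : k, r * w - c • w ∈ Submodule.span H {x * w, y * w} := by
  obtain ⟨p, hp⟩ := exists_sub_phi_mem_filtration_one hspan r
  obtain ⟨a, b, hab⟩ := Submodule.mem_span_pair.1 (mem_span_of_mem_filtration_one hp)
  refine ⟨charAlgHom μ p, Submodule.mem_span_pair.2 ⟨a, b, ?_⟩⟩
  rw [← hw, ← sub_mul, ← hab]
  simp only [smul_eq_mul, add_mul, mul_assoc]

theorem IsWeightVector.exists_sub_smul_sub_smul_mem_span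
    (hspan : Submodule.span k
      (Set.range fun t : G × Fin n₁ × Fin n₂ => monomial φ x y t.1 t.2.1 t.2.2) = ⊤)
    {μ₁ μ₂ : G →* kˣ} {w₁ w₂ : H} (hw₁ : IsWeightVector φ μ₁ w₁) (hw₂ : IsWeightVector φ μ₂ w₂)
    {p : H} (hp : p ∈ Submodule.span H {w₁, w₂}) :
    ∃ c d : k, p - c • w₁ - d • w₂ ∈ Submodule.span H {x * w₁, x * w₂, y * w₁, y * w₂} := by
  obtain ⟨r, s, rfl⟩ := Submodule.mem_span_pair.1 hp
  obtain ⟨c, hc⟩ := hw₁.exists_mul_sub_smul_mem_span hspan r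
  obtain ⟨d, hd⟩ := hw₂.exists_mul_sub_smul_mem_span hspan s
  refine ⟨c, d, ?_⟩
  have h : r • w₁ + s • w₂ - c • w₁ - d • w₂ = (r * w₁ - c • w₁) + (s * w₂ - d • w₂) := by
    rw [smul_eq_mul, smul_eq_mul]; abel
  rw [h]
  exact add_mem (Submodule.span_mono (Set.pair_subset (by simp) (by simp)) hc)
    (Submodule.span_mono (Set.pair_subset (by simp) (by simp)) hd)

section Coefficients

variable
  (hli : LinearIndependent k fun t : G × Fin n₁ × Fin n₂ => monomial φ x y t.1 t.2.1 t.2.2)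
  (hspan : Submodule.span k
    (Set.range fun t : G × Fin n₁ × Fin n₂ => monomial φ x y t.1 t.2.1 t.2.2) = ⊤)

noncomputable def monomialBasis : Module.Basis (G × Fin n₁ × Fin n₂) k H :=
  Module.Basis.mk hli hspan.ge

/-- `coeff i j z = ∑ g, z_{g,i,j} • single g 1`, where `z = ∑ z_{g,i,j} • g xⁱ yʲ`. -/
noncomputable def coeff (i : Fin n₁) (j : Fin n₂) : H →ₗ[k] MonoidAlgebra k G :=
  (monomialBasis hli hspan).constr k fun t => if t.2 = (i, j) then single t.1 1 else 0

theorem coeff_monomial (g : G) (i i' : Fin n₁) (j j' : Fin n₂) :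
    coeff hli hspan i j (monomial φ x y g i' j') = if (i', j') = (i, j) then single g 1 else 0 := by
  rw [← Module.Basis.mk_apply hli hspan.ge (g, i', j'), coeff, monomialBasis,
    Module.Basis.constr_basis]

theorem coeff_phi_mul_pow (p : MonoidAlgebra k G) (i : Fin n₁) (j : Fin n₂) :
    coeff hli hspan i j (φ p * x ^ (i : ℕ) * y ^ (j : ℕ)) = p := by
  induction p using MonoidAlgebra.induction_linear with
  | zero => simp
  | add p p' hp hp' => rw [map_add, add_mul, add_mul, map_add, hp, hp']
  | single g c =>
    rw [← mul_one c, ← smul_single', map_smul, smul_mul_assoc, smul_mul_assoc, map_smul]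
    change c • coeff hli hspan i j (monomial φ x y g i j) = _
    rw [coeff_monomial, if_pos rfl, smul_single', mul_one]

theorem coeff_eq_zero_of_mem_filtration (hxn : x ^ n₁ = 0) (hyn : y ^ n₂ = 0) {i : Fin n₁}
    {j : Fin n₂} {m : ℕ} (h : (i : ℕ) + j < m) {z : H} (hz : z ∈ filtration φ x y m) :
    coeff hli hspan i j z = 0 := by
  have hle : filtration φ x y m ≤ LinearMap.ker (coeff hli hspan i j) := by
    refine Submodule.span_le.2 ?_
    rintro _ ⟨g, i', j', hij, rfl⟩
    by_cases hlt : i' < n₁ ∧ j' < n₂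
    · have hne : ((⟨i', hlt.1⟩ : Fin n₁), (⟨j', hlt.2⟩ : Fin n₂)) ≠ (i, j) := by
        intro he
        simp only [Prod.mk.injEq, Fin.ext_iff] at he
        omega
      simpa [hne] using coeff_monomial hli hspan g i ⟨i', hlt.1⟩ j ⟨j', hlt.2⟩
    · have hij' : n₁ ≤ i' ∨ n₂ ≤ j' := by omega
      simp [monomial_eq_zero hxn hyn hij']
  exact hle hz

include hli hspan in
theorem phi_mul_pow_notMem_filtration (hxn : x ^ n₁ = 0) (hyn : y ^ n₂ = 0)
    {p : MonoidAlgebra k G} (hp : p ≠ 0) (i : Fin n₁) (j : Fin n₂) :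
    φ p * x ^ (i : ℕ) * y ^ (j : ℕ) ∉ filtration φ x y (i + j + 1) := fun hmem =>
  hp <| coeff_phi_mul_pow hli hspan p i j ▸
    coeff_eq_zero_of_mem_filtration hli hspan hxn hyn (Nat.lt_succ_self _) hmem

variable [NeZero n₁] [NeZero n₂]

theorem coeff_zero_phi (p : MonoidAlgebra k G) : coeff hli hspan 0 0 (φ p) = p := by
  simpa using coeff_phi_mul_pow hli hspan p 0 0

theorem sub_phi_coeff_zero_mem_filtration_one (hxn : x ^ n₁ = 0) (hyn : y ^ n₂ = 0) (r : H) :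
    r - φ (coeff hli hspan 0 0 r) ∈ filtration φ x y 1 := by
  obtain ⟨p, hp⟩ := exists_sub_phi_mem_filtration_one hspan r
  have h := coeff_eq_zero_of_mem_filtration hli hspan hxn hyn (i := 0) (j := 0) (by simp) hp
  rw [map_sub, coeff_zero_phi, sub_eq_zero] at h
  rwa [h]

theorem coeff_zero_mul (hR : SkewRelations φ x y χ₁ χ₂ q) (hxn : x ^ n₁ = 0) (hyn : y ^ n₂ = 0)
    (u v : H) : coeff hli hspan 0 0 (u * v) = coeff hli hspan 0 0 u * coeff hli hspan 0 0 v := by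
  have hF0 : ∀ z : H, z ∈ filtration φ x y 0 := fun z =>
    (filtration_zero hspan).symm ▸ Submodule.mem_top
  have hmem : u * v - φ (coeff hli hspan 0 0 u * coeff hli hspan 0 0 v) ∈ filtration φ x y 1 := by
    have h : ∀ a b : H, u * v - a * b = a * (v - b) + (u - a) * v := fun a b => by noncomm_ring
    have hv := mul_mem_filtration hR (hF0 (φ (coeff hli hspan 0 0 u)))
      (sub_phi_coeff_zero_mem_filtration_one hli hspan hxn hyn v)
    have hu := mul_mem_filtration hR (sub_phi_coeff_zero_mem_filtration_one hli hspan hxn hyn u)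
      (hF0 v)
    rw [zero_add] at hv
    rw [map_mul, h]
    exact add_mem hv hu
  have h := coeff_eq_zero_of_mem_filtration hli hspan hxn hyn (i := 0) (j := 0) (by simp) hmem
  rwa [map_sub, coeff_zero_phi, sub_eq_zero] at h

include hli hspan in
theorem jacobson_bot_eq_span_pair [Fintype G] [HasEnoughRootsOfUnity k (Monoid.exponent G)]
    (hR : SkewRelations φ x y χ₁ χ₂ q) (hxn : x ^ n₁ = 0) (hyn : y ^ n₂ = 0) :
    (⊥ : Ideal H).jacobson = Ideal.span {x, y} := by
  refine le_antisymm (fun z hz => mem_span_of_mem_filtration_one (φ := φ) ?_)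
    (Ideal.le_jacobson_bot_of_forall_isNilpotent fun z hz => ?_)
  · let aug : H →ₐ[k] MonoidAlgebra k G := AlgHom.ofLinearMap (coeff hli hspan 0 0)
      (by simpa using coeff_zero_phi hli hspan 1) (coeff_zero_mul hli hspan hR hxn hyn)
    have hker (lam : G →* kˣ) : charAlgHom lam (coeff hli hspan 0 0 z) = 0 := by
      let f := (charAlgHom lam).comp aug
      have hmax : (RingHom.ker f).IsMaximal :=
        RingHom.ker_isMaximal_of_surjective f fun c => ⟨algebraMap k H c, by simp [f]⟩
      exact (sInf_le ⟨bot_le, hmax⟩ : (⊥ : Ideal H).jacobson ≤ _) hz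
    simpa [eq_zero_of_forall_charAlgHom_eq_zero hker] using
      sub_phi_coeff_zero_mem_filtration_one hli hspan hxn hyn z
  · exact isNilpotent_of_mem_filtration_one hR hxn hyn <| mem_filtration_of_mem_span hR hspan
      (Set.pair_subset x_mem_filtration_one y_mem_filtration_one) hz

end Coefficients

end UnlinkedLifting

open UnlinkedLifting in
theorem nilpotent_unlinked_structure_general (k : Type*) [Field k] [IsAlgClosed k] [CharZero k]
    (G : Type*) [CommGroup G] [Fintype G]
    (H : Type*) [Ring H] [Algebra k H]
    (φ : MonoidAlgebra k G →ₐ[k] H) (x y : H) (χ₁ χ₂ : G →* kˣ) (a : G)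
    (n₁ n₂ : ℕ)
    (hn₁1 : 1 < n₁) (hn₂1 : 1 < n₂)
    (hgx : ∀ g : G, φ (MonoidAlgebra.single g 1) * x
        = ((χ₁ g : kˣ) : k) • (x * φ (MonoidAlgebra.single g 1)))
    (hgy : ∀ g : G, φ (MonoidAlgebra.single g 1) * y
        = ((χ₂ g : kˣ) : k) • (y * φ (MonoidAlgebra.single g 1)))
    (hxy : x * y = ((χ₂ a : kˣ) : k) • (y * x))
    (hxn : x ^ n₁ = 0) (hyn : y ^ n₂ = 0)
    (hli : LinearIndependent k
      (fun t : G × Fin n₁ × Fin n₂ =>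
        φ (MonoidAlgebra.single t.1 1) * x ^ (t.2.1 : ℕ) * y ^ (t.2.2 : ℕ)))
    (hspan : Submodule.span k
      (Set.range fun t : G × Fin n₁ × Fin n₂ =>
        φ (MonoidAlgebra.single t.1 1) * x ^ (t.2.1 : ℕ) * y ^ (t.2.2 : ℕ)) = ⊤) :
    -- (a) the Jacobson radical is the (two-sided) ideal generated by x and y
    (⊥ : Ideal H).jacobson = Ideal.span {x, y} ∧
    -- (b) each He_λ/Je_λ is one-dimensional with G-weight λ
    (∀ lam : G →* kˣ,
      φ (stdIdem k G lam) ∉ Submodule.span H ({x * φ (stdIdem k G lam),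
          y * φ (stdIdem k G lam)} : Set H) ∧
      (∀ p ∈ Ideal.span ({φ (stdIdem k G lam)} : Set H), ∃ c : k,
        p - c • φ (stdIdem k G lam) ∈ Submodule.span H ({x * φ (stdIdem k G lam),
          y * φ (stdIdem k G lam)} : Set H)) ∧
      (∀ g : G, φ (MonoidAlgebra.single g 1) * φ (stdIdem k G lam)
          - ((lam g : kˣ) : k) • φ (stdIdem k G lam)
        ∈ Submodule.span H ({x * φ (stdIdem k G lam),
            y * φ (stdIdem k G lam)} : Set H))) ∧
    -- (c) Je_λ/J²e_λ ≅ L_{λχ₁} ⊕ L_{λχ₂}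
    (∀ lam : G →* kˣ,
      x * φ (stdIdem k G lam) ∉ Submodule.span H
          ({x * (x * φ (stdIdem k G lam)), x * (y * φ (stdIdem k G lam)),
            y * (x * φ (stdIdem k G lam)), y * (y * φ (stdIdem k G lam))} : Set H) ∧
      y * φ (stdIdem k G lam) ∉ Submodule.span H
          ({x * (x * φ (stdIdem k G lam)), x * (y * φ (stdIdem k G lam)),
            y * (x * φ (stdIdem k G lam)), y * (y * φ (stdIdem k G lam))} : Set H) ∧
      (∀ p ∈ Submodule.span H ({x * φ (stdIdem k G lam),
          y * φ (stdIdem k G lam)} : Set H), ∃ c d : k,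
        p - c • (x * φ (stdIdem k G lam)) - d • (y * φ (stdIdem k G lam))
          ∈ Submodule.span H
            ({x * (x * φ (stdIdem k G lam)), x * (y * φ (stdIdem k G lam)),
              y * (x * φ (stdIdem k G lam)), y * (y * φ (stdIdem k G lam))} : Set H)) ∧
      (∀ g : G, φ (MonoidAlgebra.single g 1) * (x * φ (stdIdem k G lam))
          - ((lam g * χ₁ g : kˣ) : k) • (x * φ (stdIdem k G lam))
        ∈ Submodule.span H
            ({x * (x * φ (stdIdem k G lam)), x * (y * φ (stdIdem k G lam)),
              y * (x * φ (stdIdem k G lam)), y * (y * φ (stdIdem k G lam))} : Set H)) ∧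
      (∀ g : G, φ (MonoidAlgebra.single g 1) * (y * φ (stdIdem k G lam))
          - ((lam g * χ₂ g : kˣ) : k) • (y * φ (stdIdem k G lam))
        ∈ Submodule.span H
            ({x * (x * φ (stdIdem k G lam)), x * (y * φ (stdIdem k G lam)),
              y * (x * φ (stdIdem k G lam)), y * (y * φ (stdIdem k G lam))} : Set H))) := by
  have hR : SkewRelations φ x y χ₁ χ₂ (χ₂ a) := ⟨hgx, hgy, hxy⟩
  have : NeZero n₁ := ⟨by omega⟩
  have : NeZero n₂ := ⟨by omega⟩
  have : NeZero (Monoid.exponent G : k) := ⟨Nat.cast_ne_zero.2 Monoid.exponent_ne_zero_of_finite⟩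
  have hnot {p : MonoidAlgebra k G} (hp : p ≠ 0) :=
    phi_mul_pow_notMem_filtration hli hspan hxn hyn hp
  have he0 (lam : G →* kˣ) : φ (stdIdem k G lam) ∈ filtration φ x y 0 := by
    simp [filtration_zero hspan]
  refine ⟨jacobson_bot_eq_span_pair hli hspan hR hxn hyn, fun lam => ?_, fun lam => ?_⟩
  · have he : IsWeightVector φ lam (φ (stdIdem k G lam)) := by
      simpa using isWeightVector_phi_stdIdem_mul (φ := φ) lam 1
    refine ⟨?_, fun p hp => ?_, fun g => by simp [he (MonoidAlgebra.single g 1)]⟩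
    · simpa using notMem_span_of_notMem_filtration_succ hR hspan
        (by simpa using hnot (stdIdem_ne_zero lam) 0 0) (he0 lam) (he0 lam)
    · obtain ⟨r, rfl⟩ := Ideal.mem_span_singleton'.1 hp
      exact he.exists_mul_sub_smul_mem_span hspan r
  · have hxe := mul_phi_stdIdem hgx lam
    have hye := mul_phi_stdIdem hgy lam
    have hwx : IsWeightVector φ (lam * χ₁) (x * φ (stdIdem k G lam)) :=
      hxe ▸ isWeightVector_phi_stdIdem_mul _ x
    have hwy : IsWeightVector φ (lam * χ₂) (y * φ (stdIdem k G lam)) :=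
      hye ▸ isWeightVector_phi_stdIdem_mul _ y
    have hx1 := mul_mem_filtration hR x_mem_filtration_one (he0 lam)
    have hy1 := mul_mem_filtration hR y_mem_filtration_one (he0 lam)
    have hx2 : x * φ (stdIdem k G lam) ∉ filtration φ x y 2 := by
      simpa [hxe] using hnot (stdIdem_ne_zero (lam * χ₁)) ⟨1, hn₁1⟩ 0
    have hy2 : y * φ (stdIdem k G lam) ∉ filtration φ x y 2 := by
      simpa [hye] using hnot (stdIdem_ne_zero (lam * χ₂)) 0 ⟨1, hn₂1⟩
    exact ⟨notMem_span_of_notMem_filtration_succ hR hspan hx2 hx1 hy1,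
      notMem_span_of_notMem_filtration_succ hR hspan hy2 hx1 hy1,
      fun p hp => hwx.exists_sub_smul_sub_smul_mem_span hspan hwy hp,
      fun g => by simp [hwx (MonoidAlgebra.single g 1)],
      fun g => by simp [hwy (MonoidAlgebra.single g 1)]⟩

/-- Theorem 3.1 (a),(c) for the nilpotent unlinked lifting `H`: the Jacobson radical is
`J = xH + yH = Hx + Hy`, the simple modules are the one-dimensional `L_λ = He_λ/Je_λ`
(on which `G` acts with weight `λ` and `x, y` act by zero), and
`Je_λ/J²e_λ ≅ L_{λχ₁} ⊕ L_{λχ₂}`. -/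
theorem nilpotent_unlinked_structure (k : Type*) [Field k] [IsAlgClosed k] [CharZero k]
    (G : Type*) [CommGroup G] [Fintype G]
    (H : Type*) [Ring H] [Algebra k H]
    (φ : MonoidAlgebra k G →ₐ[k] H) (x y : H) (χ₁ χ₂ : G →* kˣ) (a b : G)
    (n₁ n₂ : ℕ) (hn₁ : n₁ = orderOf (χ₁ a)) (hn₂ : n₂ = orderOf (χ₂ b))
    (hn₁1 : 1 < n₁) (hn₂1 : 1 < n₂)
    (hqlin : χ₁ b * χ₂ a = 1)
    (hgx : ∀ g : G, φ (MonoidAlgebra.single g 1) * x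
        = ((χ₁ g : kˣ) : k) • (x * φ (MonoidAlgebra.single g 1)))
    (hgy : ∀ g : G, φ (MonoidAlgebra.single g 1) * y
        = ((χ₂ g : kˣ) : k) • (y * φ (MonoidAlgebra.single g 1)))
    (hxy : x * y = ((χ₂ a : kˣ) : k) • (y * x))
    (hxn : x ^ n₁ = 0) (hyn : y ^ n₂ = 0)
    (hli : LinearIndependent k
      (fun t : G × Fin n₁ × Fin n₂ =>
        φ (MonoidAlgebra.single t.1 1) * x ^ (t.2.1 : ℕ) * y ^ (t.2.2 : ℕ)))
    (hspan : Submodule.span k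
      (Set.range fun t : G × Fin n₁ × Fin n₂ =>
        φ (MonoidAlgebra.single t.1 1) * x ^ (t.2.1 : ℕ) * y ^ (t.2.2 : ℕ)) = ⊤) :
    -- (a) the Jacobson radical is the (two-sided) ideal generated by x and y
    (⊥ : Ideal H).jacobson = Ideal.span {x, y} ∧
    -- (b) each He_λ/Je_λ is one-dimensional with G-weight λ
    (∀ lam : G →* kˣ,
      φ (stdIdem k G lam) ∉ Submodule.span H ({x * φ (stdIdem k G lam),
          y * φ (stdIdem k G lam)} : Set H) ∧
      (∀ p ∈ Ideal.span ({φ (stdIdem k G lam)} : Set H), ∃ c : k,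
        p - c • φ (stdIdem k G lam) ∈ Submodule.span H ({x * φ (stdIdem k G lam),
          y * φ (stdIdem k G lam)} : Set H)) ∧
      (∀ g : G, φ (MonoidAlgebra.single g 1) * φ (stdIdem k G lam)
          - ((lam g : kˣ) : k) • φ (stdIdem k G lam)
        ∈ Submodule.span H ({x * φ (stdIdem k G lam),
            y * φ (stdIdem k G lam)} : Set H))) ∧
    -- (c) Je_λ/J²e_λ ≅ L_{λχ₁} ⊕ L_{λχ₂}
    (∀ lam : G →* kˣ,
      x * φ (stdIdem k G lam) ∉ Submodule.span H
          ({x * (x * φ (stdIdem k G lam)), x * (y * φ (stdIdem k G lam)),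
            y * (x * φ (stdIdem k G lam)), y * (y * φ (stdIdem k G lam))} : Set H) ∧
      y * φ (stdIdem k G lam) ∉ Submodule.span H
          ({x * (x * φ (stdIdem k G lam)), x * (y * φ (stdIdem k G lam)),
            y * (x * φ (stdIdem k G lam)), y * (y * φ (stdIdem k G lam))} : Set H) ∧
      (∀ p ∈ Submodule.span H ({x * φ (stdIdem k G lam),
          y * φ (stdIdem k G lam)} : Set H), ∃ c d : k,
        p - c • (x * φ (stdIdem k G lam)) - d • (y * φ (stdIdem k G lam))
          ∈ Submodule.span H
            ({x * (x * φ (stdIdem k G lam)), x * (y * φ (stdIdem k G lam)),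
              y * (x * φ (stdIdem k G lam)), y * (y * φ (stdIdem k G lam))} : Set H)) ∧
      (∀ g : G, φ (MonoidAlgebra.single g 1) * (x * φ (stdIdem k G lam))
          - ((lam g * χ₁ g : kˣ) : k) • (x * φ (stdIdem k G lam))
        ∈ Submodule.span H
            ({x * (x * φ (stdIdem k G lam)), x * (y * φ (stdIdem k G lam)),
              y * (x * φ (stdIdem k G lam)), y * (y * φ (stdIdem k G lam))} : Set H)) ∧
      (∀ g : G, φ (MonoidAlgebra.single g 1) * (y * φ (stdIdem k G lam))
          - ((lam g * χ₂ g : kˣ) : k) • (y * φ (stdIdem k G lam))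
        ∈ Submodule.span H
            ({x * (x * φ (stdIdem k G lam)), x * (y * φ (stdIdem k G lam)),
              y * (x * φ (stdIdem k G lam)), y * (y * φ (stdIdem k G lam))} : Set H))) :=
  nilpotent_unlinked_structure_general k G H φ x y χ₁ χ₂ a n₁ n₂ hn₁1 hn₂1 hgx hgy hxy hxn hyn hli
    hspan
end
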